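/- arXiv:1909.04958 — 7 statements merged into one kernel-verified Lean document; each statement's English description precedes it below -/
import Mathlib

section
/- Fix s ∈ ℂ and let 𝒫_s ⊆ M₂(ℂ) be the set of matrices of the form [[t(p+sq), t(q+sp)], [t⁻¹q, t⁻¹p]] with t ∈ ℂ, t ≠ 0, and p, q ∈ ℂ satisfying p² − q² = 1 (i.e. 𝒫_s = T(SL₂)·u(s)·SO₁,₁(ℂ) where u(s) = [[1,s],[0,1]]). Then every g ∈ 𝒫_s satisfies det g = 1 and g₁₂·g₂₂ − g₁₁·g₂₁ = s, and the converse inclusion holds — that is, 𝒫_s = {g ∈ SL₂(ℂ) : g₁₂g₂₂ − g₁₁g₂₁ = s} — if and only if s ≠ 1 and s ≠ −1. (For s = ±1 the matrices with g₁₁ = ±g₁₂, g₂₁ = ∓g₂₂ and g₁₁g₂₂ = 1/2 satisfy these equations but are not of the above form.) -/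
open Matrix

/-- The set `T(SL₂) · u(s) · SO₁,₁(ℂ)` of matrices
`[[t(p+sq), t(q+sp)], [t⁻¹q, t⁻¹p]]` with `t ≠ 0` and `p² − q² = 1`. -/
def Pset (s : ℂ) : Set (Matrix (Fin 2) (Fin 2) ℂ) :=
  {g | ∃ t p q : ℂ, t ≠ 0 ∧ p ^ 2 - q ^ 2 = 1 ∧
    g = !![t * (p + s * q), t * (q + s * p); t⁻¹ * q, t⁻¹ * p]}

lemma fwd (s : ℂ) : ∀ g ∈ Pset s, g.det = 1 ∧ g 0 1 * g 1 1 - g 0 0 * g 1 0 = s := by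
  rintro g ⟨t, p, q, ht, hpq, rfl⟩
  constructor
  · rw [Matrix.det_fin_two_of]
    field_simp
    linear_combination hpq
  · simp
    field_simp
    linear_combination s * hpq

lemma notmem1 : (!![1, 0; -1, 1] : Matrix (Fin 2) (Fin 2) ℂ) ∉ Pset 1 := by
  rintro ⟨t, p, q, ht, hpq, hm⟩
  have h10 := congrFun (congrFun hm 1) 0
  have h11 := congrFun (congrFun hm 1) 1
  simp at h10 h11
  rw [eq_comm, inv_mul_eq_iff_eq_mul₀ ht] at h10 h11
  rw [h10, h11] at hpq
  exact zero_ne_one (show (0:ℂ) = 1 by linear_combination hpq)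

lemma notmem2 : (!![1, 0; 1, 1] : Matrix (Fin 2) (Fin 2) ℂ) ∉ Pset (-1) := by
  rintro ⟨t, p, q, ht, hpq, hm⟩
  have h10 := congrFun (congrFun hm 1) 0
  have h11 := congrFun (congrFun hm 1) 1
  simp at h10 h11
  rw [eq_comm, inv_mul_eq_iff_eq_mul₀ ht] at h10 h11
  rw [h10, h11] at hpq
  exact zero_ne_one (show (0:ℂ) = 1 by linear_combination hpq)

/-- Section 5.4 (defining equations): every `g ∈ 𝒫_s` satisfies `det g = 1` and
`g₁₂ g₂₂ − g₁₁ g₂₁ = s`, and these are defining equations (i.e. the converse inclusion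
holds inside `SL₂(ℂ)`) if and only if `s ≠ ±1`. -/
theorem Pset_defining_equations (s : ℂ) :
    (∀ g ∈ Pset s, g.det = 1 ∧ g 0 1 * g 1 1 - g 0 0 * g 1 0 = s) ∧
    ((Pset s = {g : Matrix (Fin 2) (Fin 2) ℂ |
        g.det = 1 ∧ g 0 1 * g 1 1 - g 0 0 * g 1 0 = s}) ↔ (s ≠ 1 ∧ s ≠ -1)) := by
  refine ⟨fwd s, ?_, ?_⟩
  · intro h
    constructor
    · rintro rfl
      refine notmem1 ?_
      rw [h]
      refine ⟨?_, ?_⟩ <;> simp [Matrix.det_fin_two_of]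
    · rintro rfl
      refine notmem2 ?_
      rw [h]
      refine ⟨?_, ?_⟩ <;> simp [Matrix.det_fin_two_of]
  · rintro ⟨h1, h2⟩
    ext g
    constructor
    · exact fun hg => fwd s g hg
    · rintro ⟨hdet, hs⟩
      rw [Matrix.det_fin_two] at hdet
      set a := g 0 0 with ha
      set b := g 0 1 with hb
      set c := g 1 0 with hc
      set d := g 1 1 with hd
      have hdc : d ^ 2 - c ^ 2 ≠ 0 := by
        intro h0
        have hsplit : (d - c) * (d + c) = 0 := by linear_combination h0
        rcases mul_eq_zero.mp hsplit with h' | h'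
        · exact h2 (by linear_combination -hs - hdet + (a + b) * h')
        · exact h1 (by linear_combination -hs + hdet + (b - a) * h')
      obtain ⟨t, ht2⟩ := IsAlgClosed.exists_pow_nat_eq ((d ^ 2 - c ^ 2)⁻¹) (n := 2) (by norm_num)
      have key : t ^ 2 * (d ^ 2 - c ^ 2) = 1 := by
        rw [ht2]; exact inv_mul_cancel₀ hdc
      have ht : t ≠ 0 := by
        intro h0
        rw [h0] at key
        simp at key
      refine ⟨t, t * d, t * c, ht, by linear_combination key, ?_⟩
      ext i j
      fin_cases i <;> fin_cases j <;>
        simp only [Matrix.cons_val', Matrix.cons_val_zero, Matrix.cons_val_one,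
          Matrix.head_cons, Matrix.empty_val', Matrix.cons_val_fin_one, Matrix.head_fin_const]
      · show a = t * (t * d + s * (t * c))
        linear_combination -a * key + t ^ 2 * d * hdet + t ^ 2 * c * hs
      · show b = t * (t * c + s * (t * d))
        linear_combination -b * key + t ^ 2 * d * hs + t ^ 2 * c * hdet
      · show c = t⁻¹ * (t * c)
        field_simp
      · show d = t⁻¹ * (t * d)
        field_simp
end

section
/- Fix s ∈ ℂ and let 𝒫_s ⊆ M₂(ℂ) be the set of matrices of the form [[t(p+sq), t(q+sp)], [t⁻¹q, t⁻¹p]] with t ∈ ℂ, t ≠ 0, and p, q ∈ ℂ satisfying p² − q² = 1. Then 𝒫_s is a closed subset of M₂(ℂ) (with its usual topology) if and only if s ≠ 1 and s ≠ −1. In particular, for s = 1 the matrix [[a, a], [−1/(2a), 1/(2a)]] (for any a ≠ 0) lies in the closure of 𝒫₁ but not in 𝒫₁. -/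
open Matrix

lemma Pset_isClosed_of_ne (s : ℂ) (h1 : s ≠ 1) (h2 : s ≠ -1) : IsClosed (Pset s) := by
  have key : Pset s = (fun g : Matrix (Fin 2) (Fin 2) ℂ =>
      (g 0 0 * g 1 1 - g 0 1 * g 1 0, g 0 1 * g 1 1 - g 0 0 * g 1 0)) ⁻¹' {(1, s)} := by
    ext g
    constructor
    · rintro ⟨t, p, q, ht, hpq, rfl⟩
      simp only [Set.mem_preimage, Set.mem_singleton_iff, Prod.mk.injEq, cons_val', cons_val_zero,
        cons_val_one, head_cons, empty_val', cons_val_fin_one, head_fin_const, of_apply]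
      constructor
      · linear_combination (p ^ 2 - q ^ 2) * mul_inv_cancel₀ ht + hpq
      · linear_combination s * (p ^ 2 - q ^ 2) * mul_inv_cancel₀ ht + s * hpq
    · intro hg
      simp only [Set.mem_preimage, Set.mem_singleton_iff, Prod.mk.injEq] at hg
      obtain ⟨hdet, hs⟩ := hg
      set A := g 0 0; set B := g 0 1; set C := g 1 0; set D := g 1 1
      have hne : D ^ 2 - C ^ 2 ≠ 0 := by
        intro h
        have : (D - C) * (D + C) = 0 := by linear_combination h
        rcases mul_eq_zero.1 this with h' | h'
        · have hD : D = C := by linear_combination h'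
          exact h2 (by linear_combination -hs - hdet + (A + B) * hD)
        · have hD : D = -C := by linear_combination h'
          exact h1 (by linear_combination -hs + hdet + (B - A) * hD)
      obtain ⟨z, hz⟩ := IsAlgClosed.exists_pow_nat_eq (k := ℂ) (D ^ 2 - C ^ 2) (n := 2) (by norm_num)
      have hz0 : z ≠ 0 := by
        intro h; rw [h] at hz; simp at hz; exact hne hz.symm
      have hz2 : z⁻¹ * z = 1 := inv_mul_cancel₀ hz0
      refine ⟨z⁻¹, z⁻¹ * D, z⁻¹ * C, inv_ne_zero hz0, ?_, ?_⟩
      · linear_combination -(z⁻¹) ^ 2 * hz + (z⁻¹ * z + 1) * hz2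
      · ext i j
        fin_cases i <;> fin_cases j <;>
          simp only [cons_val', cons_val_zero, cons_val_one, head_cons, empty_val',
            cons_val_fin_one, head_fin_const, of_apply, Fin.mk_zero, Fin.mk_one, inv_inv, Fin.zero_eta, Fin.isValue]
        · linear_combination (z⁻¹) ^ 2 * (D * hdet + C * hs) + (z⁻¹) ^ 2 * A * hz -
            A * (z⁻¹ * z + 1) * hz2
        · linear_combination (z⁻¹) ^ 2 * (C * hdet + D * hs) + (z⁻¹) ^ 2 * B * hz -
            B * (z⁻¹ * z + 1) * hz2
        · linear_combination -C * hz2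
        · linear_combination -D * hz2
  rw [key]
  refine IsClosed.preimage ?_ isClosed_singleton
  exact (((continuous_id.matrix_elem 0 0).mul (continuous_id.matrix_elem 1 1)).sub
    ((continuous_id.matrix_elem 0 1).mul (continuous_id.matrix_elem 1 0))).prodMk
    (((continuous_id.matrix_elem 0 1).mul (continuous_id.matrix_elem 1 1)).sub
    ((continuous_id.matrix_elem 0 0).mul (continuous_id.matrix_elem 1 0)))

lemma mem_closure_one (a : ℂ) (ha : a ≠ 0) :
    !![a, a; -1 / (2 * a), 1 / (2 * a)] ∈ closure (Pset 1) := by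
  set f : ℂ → Matrix (Fin 2) (Fin 2) ℂ :=
    fun δ => !![a, a; (δ ^ 2 - 1) / (2 * a), (δ ^ 2 + 1) / (2 * a)] with hf
  have hcont : Continuous f := by
    apply continuous_matrix
    intro i j
    fin_cases i <;> fin_cases j <;> simp [hf] <;> fun_prop
  have hf0 : f 0 = !![a, a; -1 / (2 * a), 1 / (2 * a)] := by
    simp only [hf]; norm_num
  rw [← hf0]
  refine mem_closure_of_tendsto (f := f) (b := nhdsWithin (0 : ℂ) {(0:ℂ)}ᶜ)
    ((hcont.tendsto 0).mono_left nhdsWithin_le_nhds) ?_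
  filter_upwards [self_mem_nhdsWithin] with δ hδ
  have hδ0 : δ ≠ 0 := hδ
  refine ⟨a / δ, (δ + δ⁻¹) / 2, (δ - δ⁻¹) / 2, div_ne_zero ha hδ0,
    by linear_combination mul_inv_cancel₀ hδ0, ?_⟩
  ext i j
  fin_cases i <;> fin_cases j <;>
    simp only [hf, cons_val', cons_val_zero, cons_val_one, head_cons, empty_val',
      cons_val_fin_one, head_fin_const, of_apply, Fin.mk_zero, Fin.mk_one, Fin.zero_eta, Fin.isValue]
  all_goals first
    | linear_combination (-a) * mul_inv_cancel₀ hδ0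
    | (rw [inv_div]; linear_combination (a⁻¹ / 2) * mul_inv_cancel₀ hδ0)
    | (rw [inv_div]; linear_combination (-(a⁻¹) / 2) * mul_inv_cancel₀ hδ0)

lemma notMem_one (a : ℂ) (ha : a ≠ 0) :
    !![a, a; -1 / (2 * a), 1 / (2 * a)] ∉ Pset 1 := by
  rintro ⟨t, p, q, ht, hpq, hg⟩
  have ht' : t⁻¹ ≠ 0 := inv_ne_zero ht
  have h10 : -1 / (2 * a) = t⁻¹ * q := by
    have := congrFun (congrFun hg 1) 0; simpa using this
  have h11 : 1 / (2 * a) = t⁻¹ * p := by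
    have := congrFun (congrFun hg 1) 1; simpa using this
  have hq : q = -p := mul_left_cancel₀ ht'
    (show t⁻¹ * q = t⁻¹ * -p by linear_combination -h10 - h11)
  rw [hq] at hpq
  simp at hpq

lemma mem_closure_neg :
    !![(1:ℂ), -1; 1 / 2, 1 / 2] ∈ closure (Pset (-1)) := by
  set f : ℂ → Matrix (Fin 2) (Fin 2) ℂ :=
    fun δ => !![1, -1; (1 - δ ^ 2) / 2, (1 + δ ^ 2) / 2] with hf
  have hcont : Continuous f := by
    apply continuous_matrix
    intro i j
    fin_cases i <;> fin_cases j <;> simp [hf] <;> fun_prop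
  have hf0 : f 0 = !![(1:ℂ), -1; 1 / 2, 1 / 2] := by
    simp only [hf]; norm_num
  rw [← hf0]
  refine mem_closure_of_tendsto (f := f) (b := nhdsWithin (0 : ℂ) {(0:ℂ)}ᶜ)
    ((hcont.tendsto 0).mono_left nhdsWithin_le_nhds) ?_
  filter_upwards [self_mem_nhdsWithin] with δ hδ
  have hδ0 : δ ≠ 0 := hδ
  refine ⟨δ⁻¹, (δ⁻¹ + δ) / 2, (δ⁻¹ - δ) / 2, inv_ne_zero hδ0,
    by linear_combination inv_mul_cancel₀ hδ0, ?_⟩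
  ext i j
  fin_cases i <;> fin_cases j <;>
    simp only [hf, cons_val', cons_val_zero, cons_val_one, head_cons, empty_val',
      cons_val_fin_one, head_fin_const, of_apply, Fin.mk_zero, Fin.mk_one, Fin.zero_eta, Fin.isValue]
  all_goals first
    | linear_combination -(inv_mul_cancel₀ hδ0)
    | linear_combination inv_mul_cancel₀ hδ0
    | (rw [inv_inv]; linear_combination ((-1:ℂ) / 2) * mul_inv_cancel₀ hδ0)
    | (rw [inv_inv]; linear_combination ((1:ℂ) / 2) * mul_inv_cancel₀ hδ0)

lemma not_mem_neg : !![(1:ℂ), -1; 1 / 2, 1 / 2] ∉ Pset (-1) := by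
  rintro ⟨t, p, q, ht, hpq, hg⟩
  have ht' : t⁻¹ ≠ 0 := inv_ne_zero ht
  have h10 : (1:ℂ) / 2 = t⁻¹ * q := by
    have := congrFun (congrFun hg 1) 0; simpa using this
  have h11 : (1:ℂ) / 2 = t⁻¹ * p := by
    have := congrFun (congrFun hg 1) 1; simpa using this
  have hq : q = p := mul_left_cancel₀ ht' (h10.symm.trans h11)
  rw [hq] at hpq
  simp at hpq

/-- Section 5.4 (closedness of the flat): `𝒫_s` is closed in `M₂(ℂ)` iff `s ≠ ±1`;
in particular, for `s = 1` and any `a ≠ 0`, the matrix `[[a, a], [−1/(2a), 1/(2a)]]`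
lies in the closure of `𝒫₁` but not in `𝒫₁`. -/
theorem Pset_isClosed_iff (s : ℂ) :
    (IsClosed (Pset s) ↔ (s ≠ 1 ∧ s ≠ -1)) ∧
    (∀ a : ℂ, a ≠ 0 →
      !![a, a; -1 / (2 * a), 1 / (2 * a)] ∈ closure (Pset 1) ∧
      !![a, a; -1 / (2 * a), 1 / (2 * a)] ∉ Pset 1) := by
  constructor
  · constructor
    · intro hclosed
      constructor
      · rintro rfl
        exact notMem_one 1 one_ne_zero
          (hclosed.closure_eq ▸ mem_closure_one 1 one_ne_zero)
      · rintro rfl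
        exact not_mem_neg (hclosed.closure_eq ▸ mem_closure_neg)
    · rintro ⟨h1, h2⟩
      exact Pset_isClosed_of_ne s h1 h2
  · intro a ha
    exact ⟨mem_closure_one a ha, notMem_one a ha⟩
end

section
/- Let A be a symmetric n×n complex matrix and 0 ≤ r ≤ n. There exists an invertible upper triangular complex matrix C with CᵀAC equal to the diagonal matrix with r ones followed by n−r zeroes on the diagonal if and only if A has rank r and the leading principal minors Δ₁(A), …, Δ_r(A) are all nonzero. -/
open Matrix

/-- The leading principal `k×k` minor of an `n×n` matrix. -/
def leadingMinor {R : Type*} [CommRing R] {n : ℕ} (A : Matrix (Fin n) (Fin n) R)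
    (k : ℕ) (hk : k ≤ n) : R :=
  (A.submatrix (Fin.castLE hk) (Fin.castLE hk)).det

lemma sum_castLE {n k : ℕ} (hk : k ≤ n) (g : Fin n → ℂ)
    (hg : ∀ p : Fin n, ¬((p : ℕ) < k) → g p = 0) :
    ∑ p, g p = ∑ p : Fin k, g (Fin.castLE hk p) := by
  classical
  have hmap := Finset.sum_map Finset.univ ⟨Fin.castLE hk, Fin.castLE_injective hk⟩ g
  rw [show (∑ p : Fin k, g (Fin.castLE hk p)) =
      ∑ p ∈ Finset.univ.map ⟨Fin.castLE hk, Fin.castLE_injective hk⟩, g p from hmap.symm]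
  refine (Finset.sum_subset (Finset.subset_univ _) ?_).symm
  intro x _ hx
  refine hg x fun hlt => hx ?_
  simp only [Finset.mem_map, Finset.mem_univ, Function.Embedding.coeFn_mk]
  exact ⟨⟨x, hlt⟩, trivial, by ext; simp⟩

lemma tri_submatrix {n k : ℕ} (hk : k ≤ n) (C A : Matrix (Fin n) (Fin n) ℂ)
    (hC : C.BlockTriangular id) :
    (Cᵀ * A * C).submatrix (Fin.castLE hk) (Fin.castLE hk) =
      (C.submatrix (Fin.castLE hk) (Fin.castLE hk))ᵀ *
        A.submatrix (Fin.castLE hk) (Fin.castLE hk) *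
        C.submatrix (Fin.castLE hk) (Fin.castLE hk) := by
  ext i j
  have hout : (Cᵀ * A * C) (Fin.castLE hk i) (Fin.castLE hk j)
      = ∑ q : Fin k, (Cᵀ * A) (Fin.castLE hk i) (Fin.castLE hk q)
          * C (Fin.castLE hk q) (Fin.castLE hk j) := by
    rw [Matrix.mul_apply]
    refine sum_castLE hk _ (fun q hq => ?_)
    have hz : C q (Fin.castLE hk j) = 0 :=
      hC (show (id (Fin.castLE hk j) : Fin n) < id q by
        simp only [id, Fin.lt_def, Fin.coe_castLE]
        exact lt_of_lt_of_le j.2 (not_lt.mp hq))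
    rw [hz, mul_zero]
  have hin : ∀ q : Fin k, (Cᵀ * A) (Fin.castLE hk i) (Fin.castLE hk q)
      = ∑ p : Fin k, C (Fin.castLE hk p) (Fin.castLE hk i)
          * A (Fin.castLE hk p) (Fin.castLE hk q) := by
    intro q
    rw [Matrix.mul_apply]
    refine sum_castLE hk _ (fun p hp => ?_)
    have hz : Cᵀ (Fin.castLE hk i) p = 0 :=
      hC (show (id (Fin.castLE hk i) : Fin n) < id p by
        simp only [id, Fin.lt_def, Fin.coe_castLE]
        exact lt_of_lt_of_le i.2 (not_lt.mp hp))
    rw [hz, zero_mul]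
  simp only [submatrix_apply]
  rw [hout]
  simp only [Matrix.mul_apply, submatrix_apply, transpose_apply]
  refine Finset.sum_congr rfl fun q _ => ?_
  have hq := hin q
  rw [Matrix.mul_apply] at hq
  simp only [transpose_apply] at hq
  rw [hq]

lemma leadingMinor_congr {n k : ℕ} (hk : k ≤ n) (C A : Matrix (Fin n) (Fin n) ℂ)
    (hC : C.BlockTriangular id) :
    leadingMinor (Cᵀ * A * C) k hk =
      (C.submatrix (Fin.castLE hk) (Fin.castLE hk)).det ^ 2 * leadingMinor A k hk := by
  unfold leadingMinor
  rw [tri_submatrix hk C A hC, det_mul, det_mul, det_transpose]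
  ring

lemma det_sub_tri_ne {n k : ℕ} (hk : k ≤ n) (C : Matrix (Fin n) (Fin n) ℂ)
    (hC : C.BlockTriangular id) (hdet : C.det ≠ 0) :
    (C.submatrix (Fin.castLE hk) (Fin.castLE hk)).det ≠ 0 := by
  have htri' : (C.submatrix (Fin.castLE hk) (Fin.castLE hk)).BlockTriangular id := by
    intro i j hij
    exact hC (show (id (Fin.castLE hk j) : Fin n) < id (Fin.castLE hk i) by
      simp only [id, Fin.lt_def, Fin.coe_castLE]
      exact hij)
  rw [det_of_upperTriangular htri']
  rw [det_of_upperTriangular hC] at hdet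
  have h1 : ∀ i, C i i ≠ 0 := fun i h0 =>
    hdet (Finset.prod_eq_zero (Finset.mem_univ i) h0)
  exact Finset.prod_ne_zero_iff.mpr fun i _ => h1 _

lemma key {n : ℕ} (r : ℕ) (hrn : r ≤ n) (A : Matrix (Fin n) (Fin n) ℂ) (hA : A.IsSymm)
    (hmin : ∀ (k : ℕ), 1 ≤ k → ∀ (h2 : k ≤ r), leadingMinor A k (h2.trans hrn) ≠ 0) :
    ∀ k : ℕ, k ≤ r → ∃ C : Matrix (Fin n) (Fin n) ℂ, C.det ≠ 0 ∧ C.BlockTriangular id ∧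
      ∀ i j : Fin n, (i : ℕ) < k → (Cᵀ * A * C) i j = if j = i then 1 else 0 := by
  intro k
  induction k with
  | zero =>
    intro _
    exact ⟨1, by simp, blockTriangular_one, fun i j h => absurd h (Nat.not_lt_zero _)⟩
  | succ k ih =>
    intro hk
    obtain ⟨C, hdet, htri, hrow⟩ := ih (Nat.le_of_succ_le hk)
    set M : Matrix (Fin n) (Fin n) ℂ := Cᵀ * A * C with hMdef
    have hMsymm : Mᵀ = M := by
      rw [hMdef, transpose_mul, transpose_mul, transpose_transpose, hA.eq, ← Matrix.mul_assoc]
    have hMs : ∀ i j, M j i = M i j := fun i j => by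
      have h := congrFun (congrFun hMsymm i) j
      simpa using h
    have hkn : (k : ℕ) < n := lt_of_lt_of_le hk hrn
    set κ : Fin n := ⟨k, hkn⟩ with hκ
    have hminM : leadingMinor M (k + 1) (hk.trans hrn) ≠ 0 := by
      rw [hMdef, leadingMinor_congr (hk.trans hrn) C A htri]
      exact mul_ne_zero (pow_ne_zero 2 (det_sub_tri_ne _ C htri hdet))
        (hmin (k + 1) (Nat.succ_le_succ (Nat.zero_le k)) hk)
    have hdiagM : M κ κ ≠ 0 := by
      have hsub : M.submatrix (Fin.castLE (hk.trans hrn)) (Fin.castLE (hk.trans hrn)) =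
          Matrix.diagonal (fun p : Fin (k + 1) => if (p : ℕ) < k then 1 else M κ κ) := by
        ext p q
        simp only [submatrix_apply, diagonal_apply]
        by_cases hpq : p = q
        · subst hpq
          rw [if_pos rfl]
          by_cases hp : (p : ℕ) < k
          · rw [hrow _ _ hp, if_pos rfl, if_pos hp]
          · have hpk : (p : ℕ) = k := Nat.le_antisymm (Nat.lt_succ_iff.mp p.2) (Nat.not_lt.mp hp)
            have hcast : Fin.castLE (hk.trans hrn) p = κ := Fin.ext (by simpa using hpk)
            rw [hcast, if_neg hp]
        · rw [if_neg hpq]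
          have hne : ¬(Fin.castLE (hk.trans hrn) q = Fin.castLE (hk.trans hrn) p) :=
            fun h => hpq (Fin.castLE_injective _ h).symm
          by_cases hp : (p : ℕ) < k
          · rw [hrow _ _ hp, if_neg hne]
          · have hpk : (p : ℕ) = k := Nat.le_antisymm (Nat.lt_succ_iff.mp p.2) (Nat.not_lt.mp hp)
            have hq : (q : ℕ) < k := by
              rcases Nat.lt_or_ge (q : ℕ) k with h | h
              · exact h
              · exact absurd (Fin.ext (hpk.trans (Nat.le_antisymm h (Nat.lt_succ_iff.mp q.2))) : p = q) hpq
            rw [show M (Fin.castLE (hk.trans hrn) p) (Fin.castLE (hk.trans hrn) q) =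
                M (Fin.castLE (hk.trans hrn) q) (Fin.castLE (hk.trans hrn) p) from hMs _ _,
              hrow _ _ hq]
            rw [if_neg (fun h => hpq (Fin.castLE_injective _ h))]
      have hlm : leadingMinor M (k + 1) (hk.trans hrn) = M κ κ := by
        unfold leadingMinor
        rw [hsub, det_diagonal, Fin.prod_univ_castSucc]
        simp
      rw [hlm] at hminM
      exact hminM
    obtain ⟨s, hs⟩ := IsAlgClosed.exists_pow_nat_eq (k := ℂ) (M κ κ)⁻¹ (n := 2) (by norm_num)
    have hs0 : s ≠ 0 := by
      intro h
      rw [h] at hs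
      simp only [ne_eq, OfNat.ofNat_ne_zero, not_false_eq_true, zero_pow] at hs
      exact hdiagM (inv_eq_zero.mp hs.symm)
    set v : Fin n → ℂ := fun j => if k < (j : ℕ) then -(M κ j) / M κ κ else 0 with hv
    have hvκ : v κ = 0 := by simp [hv, hκ]
    have hvlow : ∀ j : Fin n, ¬ k < (j : ℕ) → v j = 0 := fun j h => by simp [hv, h]
    set w : Matrix (Fin n) (Fin n) ℂ := Matrix.of (fun p a => if p = κ then v a else 0) with hw
    set S : Matrix (Fin n) (Fin n) ℂ := Matrix.diagonal (fun i => if i = κ then s else 1) with hS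
    have hwtri : w.BlockTriangular id := by
      intro p a hpa
      show (if p = κ then v a else 0) = 0
      by_cases hp : p = κ
      · subst hp
        rw [if_pos rfl]
        refine hvlow a fun hka => ?_
        have : (a : ℕ) < k := hpa
        omega
      · rw [if_neg hp]
    have hFtri : (1 + w).BlockTriangular id := blockTriangular_one.add hwtri
    have hFdet : (1 + w).det = 1 := by
      rw [det_of_upperTriangular hFtri]
      refine Finset.prod_eq_one fun i _ => ?_
      show (1 : Matrix (Fin n) (Fin n) ℂ) i i + w i i = 1
      rw [Matrix.one_apply_eq]
      show 1 + (if i = κ then v i else 0) = 1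
      by_cases hi : i = κ
      · subst hi; rw [if_pos rfl, hvκ, add_zero]
      · rw [if_neg hi, add_zero]
    have hSdet : S.det = s := by
      rw [hS, det_diagonal]
      simp
    have hwX : ∀ (X : Matrix (Fin n) (Fin n) ℂ) (a b : Fin n),
        (wᵀ * X) a b = v a * X κ b := by
      intro X a b
      simp only [Matrix.mul_apply, transpose_apply, hw, of_apply, ite_mul, zero_mul]
      simp
    have hMw : ∀ a b : Fin n, (M * w) a b = M a κ * v b := by
      intro a b
      simp only [Matrix.mul_apply, hw, of_apply, mul_ite, mul_zero]
      simp
    refine ⟨C * ((1 + w) * S), ?_, ?_, ?_⟩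
    · rw [det_mul, det_mul, hFdet, hSdet, one_mul]
      exact mul_ne_zero hdet hs0
    · exact htri.mul (hFtri.mul (blockTriangular_diagonal _))
    · have hre : (C * ((1 + w) * S))ᵀ * A * (C * ((1 + w) * S)) =
          ((1 + w) * S)ᵀ * M * ((1 + w) * S) := by
        rw [hMdef]
        simp only [transpose_mul, Matrix.mul_assoc]
      have hexp : (1 + w)ᵀ * M * (1 + w) = M + wᵀ * M + (M * w + wᵀ * (M * w)) := by
        rw [transpose_add, transpose_one]
        noncomm_ring
      have hfin : ∀ a b : Fin n, ((((1 + w) * S)ᵀ * M * ((1 + w) * S) : Matrix (Fin n) (Fin n) ℂ)) a b =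
          (if a = κ then s else 1) *
            (M a b + v a * M κ b + (M a κ * v b + v a * (M κ κ * v b))) *
            (if b = κ then s else 1) := by
        intro a b
        have hstep : ((1 + w) * S)ᵀ * M * ((1 + w) * S) =
            S * ((1 + w)ᵀ * M * (1 + w)) * S := by
          rw [transpose_mul, diagonal_transpose]
          simp only [Matrix.mul_assoc]
          rw [hS]
        rw [hstep, hexp, hS]
        simp only [mul_diagonal, diagonal_mul, Matrix.add_apply]
        rw [hwX M a b, hMw a b, hwX (M * w) a b, hMw κ b]
      intro i j hi
      rw [hre, hfin]
      rcases Nat.lt_succ_iff_lt_or_eq.mp hi with hik | hik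
      · -- i < k
        have hiκ : ¬(i = κ) := fun h => by
          rw [h] at hik
          exact absurd hik (lt_irrefl k)
        have hvi : v i = 0 := hvlow i (by omega)
        have hMiκ : M i κ = 0 := by
          rw [hrow i κ hik, if_neg (fun h : κ = i => by
            have : (κ : ℕ) = (i : ℕ) := by rw [h]
            simp only [hκ] at this
            omega)]
        rw [hrow i j hik, hvi, hMiκ]
        by_cases hji : j = i
        · subst hji
          rw [if_pos rfl, if_neg hiκ]
          ring
        · rw [if_neg hji, if_neg hiκ]
          ring
      · -- i = κ
        have hiκ : i = κ := Fin.ext (by simpa [hκ] using hik)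
        subst hiκ
        rw [hvκ, if_pos rfl]
        by_cases hjκ : j = κ
        · subst hjκ
          rw [hvκ, if_pos rfl, if_pos rfl]
          have hcalc : s * (M κ κ + 0 * M κ κ + (M κ κ * 0 + 0 * (M κ κ * 0))) * s
              = s ^ 2 * M κ κ := by ring
          rw [hcalc, hs, inv_mul_cancel₀ hdiagM]
        · rw [if_neg hjκ, if_neg hjκ, mul_one]
          rcases lt_trichotomy (j : ℕ) k with hjk | hjk | hjk
          · have hMκj : M κ j = 0 := by
              rw [hMs j κ, hrow j κ hjk, if_neg (fun h : κ = j => by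
                have : (κ : ℕ) = (j : ℕ) := by rw [h]
                simp only [hκ] at this
                omega)]
            rw [hMκj, hvlow j (by omega)]
            ring
          · exact absurd (Fin.ext (show (j : ℕ) = (κ : ℕ) by simp [hκ, hjk]) : j = κ) hjκ
          · have hvj : v j = -(M κ j) / M κ κ := by rw [hv]; simp [hjk]
            rw [hvj]
            have hcan : M κ κ * (-(M κ j) / M κ κ) = -(M κ j) := by
              field_simp
            rw [hcan]
            ring

/-- Section 6.1 (the open Borel orbit): a symmetric complex `n×n` matrix `A` is congruent
via an invertible upper triangular matrix to `diag(1,…,1,0,…,0)` (with `r` ones) iff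
`A` has rank `r` and its leading principal minors `Δ₁(A), …, Δ_r(A)` are nonzero. -/
theorem mem_open_borel_orbit_iff (n r : ℕ) (hrn : r ≤ n)
    (A : Matrix (Fin n) (Fin n) ℂ) (hA : A.IsSymm) :
    (∃ C : Matrix (Fin n) (Fin n) ℂ, C.det ≠ 0 ∧ C.BlockTriangular id ∧
        Cᵀ * A * C = Matrix.diagonal (fun i : Fin n => if (i : ℕ) < r then 1 else 0)) ↔
      (A.rank = r ∧ ∀ (k : ℕ) (_ : 1 ≤ k) (h2 : k ≤ r),
        leadingMinor A k (h2.trans hrn) ≠ 0) := by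
  classical
  constructor
  · rintro ⟨C, hdet, htri, heq⟩
    have hCdet : IsUnit C.det := isUnit_iff_ne_zero.mpr hdet
    have hCTdet : IsUnit Cᵀ.det := by rwa [det_transpose]
    have hrk : (Cᵀ * A * C).rank = A.rank := by
      rw [rank_mul_eq_left_of_isUnit_det C (Cᵀ * A) hCdet,
        rank_mul_eq_right_of_isUnit_det Cᵀ A hCTdet]
    constructor
    · rw [← hrk, heq, rank_diagonal]
      have e1 : {i : Fin n // (if (i : ℕ) < r then (1 : ℂ) else 0) ≠ 0} ≃
          {i : Fin n // (i : ℕ) < r} :=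
        Equiv.subtypeEquivRight (fun i => by by_cases h : (i : ℕ) < r <;> simp [h])
      have e2 : {i : Fin n // (i : ℕ) < r} ≃ Fin r :=
        ⟨fun x => ⟨x.1, x.2⟩, fun j => ⟨⟨j, lt_of_lt_of_le j.2 hrn⟩, j.2⟩,
          fun x => Subtype.ext (Fin.ext rfl), fun j => rfl⟩
      rw [Fintype.card_congr (e1.trans e2), Fintype.card_fin]
    · intro k h1 h2
      intro h0
      have e := leadingMinor_congr (h2.trans hrn) C A htri
      rw [heq, h0, mul_zero] at e
      have hone : leadingMinor
          (Matrix.diagonal (fun i : Fin n => if (i : ℕ) < r then (1 : ℂ) else 0)) k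
          (h2.trans hrn) = 1 := by
        unfold leadingMinor
        rw [submatrix_diagonal _ _ (Fin.castLE_injective _), det_diagonal]
        refine Finset.prod_eq_one fun p _ => ?_
        have : (p : ℕ) < r := lt_of_lt_of_le p.2 h2
        simp [this]
      rw [hone] at e
      exact one_ne_zero e
  · rintro ⟨hrank, hmin⟩
    obtain ⟨C, hdet, htri, hrow⟩ := key r hrn A hA hmin r le_rfl
    refine ⟨C, hdet, htri, ?_⟩
    set M : Matrix (Fin n) (Fin n) ℂ := Cᵀ * A * C with hMdef
    have hMsymm : Mᵀ = M := by
      rw [hMdef, transpose_mul, transpose_mul, transpose_transpose, hA.eq, ← Matrix.mul_assoc]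
    have hMs : ∀ i j, M j i = M i j := fun i j => by
      have h := congrFun (congrFun hMsymm i) j
      simpa using h
    have hCdet : IsUnit C.det := isUnit_iff_ne_zero.mpr hdet
    have hCTdet : IsUnit Cᵀ.det := by rwa [det_transpose]
    have hrankM : M.rank = r := by
      rw [hMdef, rank_mul_eq_left_of_isUnit_det C (Cᵀ * A) hCdet,
        rank_mul_eq_right_of_isUnit_det Cᵀ A hCTdet, hrank]
    have hzero : ∀ i j : Fin n, ¬(i : ℕ) < r → ¬(j : ℕ) < r → M i j = 0 := by
      intro i j hi hj
      by_contra hne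
      set g : Fin (r + 1) → Fin n :=
        fun p => if h : (p : ℕ) < r then ⟨p, lt_of_lt_of_le h hrn⟩ else i with hg
      set g' : Fin (r + 1) → Fin n :=
        fun q => if h : (q : ℕ) < r then ⟨q, lt_of_lt_of_le h hrn⟩ else j with hg'
      have hsubm : M.submatrix g g' =
          Matrix.diagonal (fun p : Fin (r + 1) => if (p : ℕ) < r then 1 else M i j) := by
        ext p q
        simp only [submatrix_apply, diagonal_apply, hg, hg']
        by_cases hp : (p : ℕ) < r <;> by_cases hq : (q : ℕ) < r
        · rw [dif_pos hp, dif_pos hq, hrow _ _ hp]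
          by_cases hpq : p = q
          · subst hpq
            rw [if_pos rfl, if_pos rfl, if_pos hp]
          · rw [if_neg (fun h : (⟨(q : ℕ), _⟩ : Fin n) = ⟨(p : ℕ), _⟩ => by
                have hv : (q : ℕ) = (p : ℕ) := by injection h
                exact hpq (Fin.ext hv.symm)), if_neg hpq]
        · rw [dif_pos hp, dif_neg hq, hrow _ _ hp]
          rw [if_neg (fun h : j = (⟨(p : ℕ), _⟩ : Fin n) => by
              have : (j : ℕ) = (p : ℕ) := by
                have := congrArg (Fin.val) h
                simpa using this
              omega),
            if_neg (fun h : p = q => by rw [h] at hp; exact hq hp)]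
        · rw [dif_neg hp, dif_pos hq, hMs _ _, hrow _ _ hq]
          rw [if_neg (fun h : i = (⟨(q : ℕ), _⟩ : Fin n) => by
              have : (i : ℕ) = (q : ℕ) := by
                have := congrArg (Fin.val) h
                simpa using this
              omega),
            if_neg (fun h : p = q => by rw [h] at hp; exact hp hq)]
        · rw [dif_neg hp, dif_neg hq]
          have hpq : p = q := by
            have h1 : (p : ℕ) = r := Nat.le_antisymm (Nat.lt_succ_iff.mp p.2) (Nat.not_lt.mp hp)
            have h2 : (q : ℕ) = r := Nat.le_antisymm (Nat.lt_succ_iff.mp q.2) (Nat.not_lt.mp hq)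
            exact Fin.ext (h1.trans h2.symm)
          rw [if_pos hpq, if_neg hp]
      have hdetsub : (M.submatrix g g').det = M i j := by
        rw [hsubm, det_diagonal, Fin.prod_univ_castSucc]
        simp
      set P : Matrix (Fin (r + 1)) (Fin n) ℂ := (1 : Matrix (Fin n) (Fin n) ℂ).submatrix g id
        with hP
      set Q : Matrix (Fin n) (Fin (r + 1)) ℂ := (1 : Matrix (Fin n) (Fin n) ℂ).submatrix id g'
        with hQ
      have h1 : P * M = M.submatrix g id := by
        ext p b
        simp only [Matrix.mul_apply, hP, submatrix_apply, Matrix.one_apply, ite_mul, zero_mul,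
          id_eq]
        simp
      have h2 : M.submatrix g id * Q = M.submatrix g g' := by
        ext p q
        simp only [Matrix.mul_apply, hQ, submatrix_apply, Matrix.one_apply, mul_ite, mul_zero,
          id_eq]
        simp
      have hPMQ : P * M * Q = M.submatrix g g' := by rw [h1, h2]
      have hrsub : (M.submatrix g g').rank = r + 1 := by
        rw [rank_of_isUnit _ ((Matrix.isUnit_iff_isUnit_det _).mpr
          (isUnit_iff_ne_zero.mpr (by rw [hdetsub]; exact hne))), Fintype.card_fin]
      have hle : (M.submatrix g g').rank ≤ M.rank := by
        rw [← hPMQ]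
        exact le_trans (rank_mul_le_left (P * M) Q) (rank_mul_le_right P M)
      rw [hrsub, hrankM] at hle
      omega
    ext i j
    rw [diagonal_apply]
    by_cases hi : (i : ℕ) < r
    · rw [hrow i j hi]
      by_cases hji : j = i
      · subst hji
        rw [if_pos rfl, if_pos rfl, if_pos hi]
      · rw [if_neg hji, if_neg (fun h : i = j => hji h.symm)]
    · by_cases hj : (j : ℕ) < r
      · rw [hMs j i, hrow j i hj]
        rw [if_neg (fun h : i = j => by rw [h] at hi; exact hi hj),
          if_neg (fun h : i = j => by rw [h] at hi; exact hi hj)]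
      · rw [hzero i j hi hj]
        by_cases hij : i = j
        · rw [if_pos hij, if_neg hi]
        · rw [if_neg hij]
end

section
/- Let A and B be symmetric n×n real matrices, both of rank r, and assume that the leading principal minors Δ_k(A) and Δ_k(B) are nonzero for all 1 ≤ k ≤ r. Then there exists an invertible upper triangular real matrix C with CᵀAC = B if and only if Δ_k(A) and Δ_k(B) have the same sign for every 1 ≤ k ≤ r. -/
open Matrix Finset

namespace BorelAux

variable {n : ℕ}

lemma diag_mul {C D : Matrix (Fin n) (Fin n) ℝ} (hC : C.BlockTriangular id)
    (hD : D.BlockTriangular id) (i : Fin n) : (C * D) i i = C i i * D i i := by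
  rw [Matrix.mul_apply, Finset.sum_eq_single i]
  · intro l _ hl
    rcases lt_or_gt_of_ne hl with h | h
    · rw [hC (show (id l : Fin n) < id i from h), zero_mul]
    · rw [hD (show (id i : Fin n) < id l from h), mul_zero]
  · intro h; exact absurd (Finset.mem_univ i) h

/-- selection matrices: a submatrix is a product. -/
lemma submatrix_eq_mul_mul (A : Matrix (Fin n) (Fin n) ℝ) {m : ℕ} (f g : Fin m → Fin n) :
    A.submatrix f g = (Matrix.of fun (i : Fin m) (j : Fin n) => if j = f i then (1:ℝ) else 0)
      * A * (Matrix.of fun (i : Fin n) (j : Fin m) => if i = g j then (1:ℝ) else 0) := by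
  ext i j
  simp [Matrix.mul_apply, ite_mul, mul_ite, Finset.sum_ite_eq, Finset.sum_ite_eq']

lemma rank_submatrix_le' (A : Matrix (Fin n) (Fin n) ℝ) {m : ℕ} (f g : Fin m → Fin n) :
    (A.submatrix f g).rank ≤ A.rank := by
  rw [submatrix_eq_mul_mul A f g]
  exact le_trans (Matrix.rank_mul_le_left _ _) (Matrix.rank_mul_le_right _ _)

/-- the selection matrix onto the first k indices. -/
def P (k : ℕ) (hk : k ≤ n) : Matrix (Fin n) (Fin k) ℝ :=
  Matrix.of fun i j => if i = Fin.castLE hk j then 1 else 0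

lemma conj_P (M : Matrix (Fin n) (Fin n) ℝ) (k : ℕ) (hk : k ≤ n) :
    (P k hk)ᵀ * M * (P k hk) = M.submatrix (Fin.castLE hk) (Fin.castLE hk) := by
  ext i j
  simp [P, Matrix.mul_apply, ite_mul, mul_ite, Finset.sum_ite_eq, Finset.sum_ite_eq']

lemma mul_P {C : Matrix (Fin n) (Fin n) ℝ} (hC : C.BlockTriangular id) (k : ℕ) (hk : k ≤ n) :
    C * P k hk = P k hk * (C.submatrix (Fin.castLE hk) (Fin.castLE hk)) := by
  ext i j
  simp only [P, Matrix.mul_apply, Matrix.of_apply, mul_ite, mul_one, mul_zero, ite_mul, one_mul,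
    zero_mul, Finset.sum_ite_eq', Finset.mem_univ, if_true]
  by_cases hi : (i : ℕ) < k
  · rw [Finset.sum_eq_single (⟨(i : ℕ), hi⟩ : Fin k)]
    · simp [Fin.ext_iff]
    · intro b _ hb
      rw [if_neg, ]
      · intro h
        exact hb (by simp [Fin.ext_iff] at h ⊢; omega)
    · intro h; exact absurd (Finset.mem_univ _) h
  · rw [Finset.sum_eq_zero, hC]
    · show (id (Fin.castLE hk j) : Fin n) < id i
      simp only [id]
      rw [Fin.lt_def]
      exact lt_of_lt_of_le j.2 (not_lt.mp hi)
    · intro b _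
      rw [if_neg]
      intro h
      exact hi (h ▸ b.2)

end BorelAux

namespace BorelAux
variable {n : ℕ}

lemma submatrix_blockTriangular {C : Matrix (Fin n) (Fin n) ℝ} (hC : C.BlockTriangular id)
    (k : ℕ) (hk : k ≤ n) :
    (C.submatrix (Fin.castLE hk) (Fin.castLE hk)).BlockTriangular id := by
  intro i j hij
  exact hC (show (id (Fin.castLE hk j) : Fin n) < id (Fin.castLE hk i) from hij)

lemma leadingMinor_conj {C : Matrix (Fin n) (Fin n) ℝ} (A : Matrix (Fin n) (Fin n) ℝ)
    (hC : C.BlockTriangular id) (k : ℕ) (hk : k ≤ n) :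
    leadingMinor (Cᵀ * A * C) k hk =
      (∏ i : Fin k, C (Fin.castLE hk i) (Fin.castLE hk i)) ^ 2 * leadingMinor A k hk := by
  set Cs := C.submatrix (Fin.castLE hk) (Fin.castLE hk) with hCs
  have h1 : (Cᵀ * A * C).submatrix (Fin.castLE hk) (Fin.castLE hk) =
      Csᵀ * (A.submatrix (Fin.castLE hk) (Fin.castLE hk)) * Cs := by
    calc (Cᵀ * A * C).submatrix (Fin.castLE hk) (Fin.castLE hk)
        = (P k hk)ᵀ * (Cᵀ * A * C) * P k hk := (conj_P _ k hk).symm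
      _ = (C * P k hk)ᵀ * A * (C * P k hk) := by
          simp only [Matrix.transpose_mul, Matrix.mul_assoc]
      _ = (P k hk * Cs)ᵀ * A * (P k hk * Cs) := by rw [mul_P hC k hk]
      _ = Csᵀ * ((P k hk)ᵀ * A * P k hk) * Cs := by
          simp only [Matrix.transpose_mul, Matrix.mul_assoc]
      _ = Csᵀ * (A.submatrix (Fin.castLE hk) (Fin.castLE hk)) * Cs := by rw [conj_P]
  rw [leadingMinor, h1, Matrix.det_mul, Matrix.det_mul, Matrix.det_transpose,
    det_of_upperTriangular (submatrix_blockTriangular hC k hk)]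
  simp only [Matrix.submatrix_apply, leadingMinor]
  ring

end BorelAux

namespace BorelAux
variable {n : ℕ}

noncomputable def dd (A : Matrix (Fin n) (Fin n) ℝ) (k : ℕ) : ℝ :=
  if h : k ≤ n then leadingMinor A k h else 0

lemma dd_eq (A : Matrix (Fin n) (Fin n) ℝ) (k : ℕ) (hk : k ≤ n) :
    dd A k = leadingMinor A k hk := dif_pos hk

lemma dd_zero (A : Matrix (Fin n) (Fin n) ℝ) : dd A 0 = 1 := by
  rw [dd_eq A 0 (Nat.zero_le n), leadingMinor, Matrix.det_isEmpty]

noncomputable def eps (A : Matrix (Fin n) (Fin n) ℝ) (k : ℕ) : ℝ :=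
  if 0 < dd A (k + 1) * dd A k then 1 else -1

lemma eps_ne_zero (A : Matrix (Fin n) (Fin n) ℝ) (k : ℕ) : eps A k ≠ 0 := by
  unfold eps; split <;> norm_num

lemma eps_sq (A : Matrix (Fin n) (Fin n) ℝ) (k : ℕ) : eps A k ^ 2 = 1 := by
  unfold eps; split <;> norm_num

end BorelAux

namespace BorelAux
variable {n : ℕ}

lemma dd_conj {C : Matrix (Fin n) (Fin n) ℝ} (A : Matrix (Fin n) (Fin n) ℝ)
    (hC : C.BlockTriangular id) (k : ℕ) (hk : k ≤ n) :
    dd (Cᵀ * A * C) k =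
      (∏ i : Fin k, C (Fin.castLE hk i) (Fin.castLE hk i)) ^ 2 * dd A k := by
  rw [dd_eq _ k hk, dd_eq A k hk, leadingMinor_conj A hC k hk]

lemma reduce : ∀ (r : ℕ), r ≤ n → ∀ (A : Matrix (Fin n) (Fin n) ℝ), A.IsSymm →
    (∀ k, 1 ≤ k → k ≤ r → dd A k ≠ 0) →
    ∃ C : Matrix (Fin n) (Fin n) ℝ, C.BlockTriangular id ∧ (∀ i, C i i ≠ 0) ∧
      (∀ i j : Fin n, i ≠ j → ((i:ℕ) < r ∨ (j:ℕ) < r) → (Cᵀ * A * C) i j = 0) ∧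
      (∀ i : Fin n, (i:ℕ) < r → (Cᵀ * A * C) i i = eps A i) := by
  intro r
  induction r with
  | zero =>
    intro _ A _ _
    exact ⟨1, blockTriangular_one, fun i => by simp,
      fun i j _ h => by omega, fun i h => by omega⟩
  | succ r IH =>
    intro hrn A hA hΔ
    have hrn' : r ≤ n := (Nat.le_succ r).trans hrn
    obtain ⟨C₀, ht₀, hd₀, hz₀, hdg₀⟩ :=
      IH hrn' A hA (fun k h1 h2 => hΔ k h1 (h2.trans (Nat.le_succ r)))
    set M : Matrix (Fin n) (Fin n) ℝ := C₀ᵀ * A * C₀ with hMdef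
    have hMsymm : M.IsSymm := by
      rw [Matrix.IsSymm] at hA ⊢
      simp only [hMdef, Matrix.transpose_mul, Matrix.transpose_transpose, hA, Matrix.mul_assoc]
    set q : Fin n := ⟨r, lt_of_lt_of_le (Nat.lt_succ_self r) hrn⟩ with hq
    -- leading blocks of M are diagonal
    have hblock : ∀ (k : ℕ) (hk1 : k ≤ r + 1) (hkn : k ≤ n),
        dd M k = ∏ i : Fin k, M (Fin.castLE hkn i) (Fin.castLE hkn i) := by
      intro k hk1 hkn
      rw [dd_eq M k hkn, leadingMinor]
      have hdg : M.submatrix (Fin.castLE hkn) (Fin.castLE hkn) =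
          Matrix.diagonal (fun i => M (Fin.castLE hkn i) (Fin.castLE hkn i)) := by
        ext i j
        by_cases hij : i = j
        · subst hij; simp
        · rw [Matrix.diagonal_apply_ne _ hij, Matrix.submatrix_apply]
          apply hz₀
          · intro hcc
            exact hij (Fin.castLE_injective hkn hcc)
          · rcases lt_or_gt_of_ne hij with h | h
            · left; have := j.2; have := Fin.lt_def.mp h; simp at this ⊢; omega
            · right; have := i.2; have := Fin.lt_def.mp h; simp at this ⊢; omega
      rw [hdg, Matrix.det_diagonal]
    set p : ℝ := M q q with hp
    set e : ℝ := ∏ i : Fin r, eps A i with he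
    have hdiagvals : ∀ i : Fin r, M (Fin.castLE hrn' i) (Fin.castLE hrn' i) = eps A i := by
      intro i
      rw [hdg₀ (Fin.castLE hrn' i) i.2]
      rfl
    have hddMr : dd M r = e := by
      rw [hblock r (Nat.le_succ r) hrn', he]
      exact Finset.prod_congr rfl fun i _ => hdiagvals i
    have hlast : Fin.castLE hrn (Fin.last r) = q := by apply Fin.ext; simp [hq]
    have hddMr1 : dd M (r+1) = e * p := by
      rw [hblock (r+1) le_rfl hrn, Fin.prod_univ_castSucc, hlast]
      congr 1
      rw [he]
      apply Finset.prod_congr rfl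
      intro i _
      have hcast : Fin.castLE hrn (Fin.castSucc i) = Fin.castLE hrn' i := by
        apply Fin.ext; simp
      rw [hcast, hdiagvals i]
    have hene : e ≠ 0 := Finset.prod_ne_zero_iff.mpr fun i _ => eps_ne_zero A i
    -- minor transformation
    have hs1 : dd M (r+1) = (∏ i : Fin (r+1), C₀ (Fin.castLE hrn i) (Fin.castLE hrn i)) ^ 2 * dd A (r+1) :=
      dd_conj A ht₀ (r+1) hrn
    have hs2 : dd M r = (∏ i : Fin r, C₀ (Fin.castLE hrn' i) (Fin.castLE hrn' i)) ^ 2 * dd A r :=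
      dd_conj A ht₀ r hrn'
    have hprodC1 : (∏ i : Fin (r+1), C₀ (Fin.castLE hrn i) (Fin.castLE hrn i)) ≠ 0 :=
      Finset.prod_ne_zero_iff.mpr fun i _ => hd₀ _
    have hprodC2 : (∏ i : Fin r, C₀ (Fin.castLE hrn' i) (Fin.castLE hrn' i)) ≠ 0 :=
      Finset.prod_ne_zero_iff.mpr fun i _ => hd₀ _
    have hddA1 : dd A (r+1) ≠ 0 := hΔ (r+1) (by omega) le_rfl
    have hddAr : dd A r ≠ 0 := by
      rcases Nat.eq_zero_or_pos r with h | h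
      · rw [h, dd_zero]; norm_num
      · exact hΔ r h (Nat.le_succ r)
    have hpne : p ≠ 0 := by
      intro h0
      rw [h0, mul_zero] at hddMr1
      rw [hddMr1] at hs1
      exact hddA1 (by
        have := hs1.symm
        rcases mul_eq_zero.mp this with h | h
        · exact absurd h (pow_ne_zero 2 hprodC1)
        · exact h)
    have hsign : 0 < p ↔ 0 < dd A (r+1) * dd A r := by
      have key : p * e ^ 2 =
          ((∏ i : Fin (r+1), C₀ (Fin.castLE hrn i) (Fin.castLE hrn i)) *
           (∏ i : Fin r, C₀ (Fin.castLE hrn' i) (Fin.castLE hrn' i))) ^ 2 *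
          (dd A (r+1) * dd A r) := by
        have h1 : dd M (r+1) * dd M r = (e * p) * e := by rw [hddMr1, hddMr]
        have h2 : dd M (r+1) * dd M r =
            ((∏ i : Fin (r+1), C₀ (Fin.castLE hrn i) (Fin.castLE hrn i)) ^ 2 * dd A (r+1)) *
            ((∏ i : Fin r, C₀ (Fin.castLE hrn' i) (Fin.castLE hrn' i)) ^ 2 * dd A r) := by
          rw [← hs1, ← hs2]
        rw [h1] at h2
        nlinarith [h2]
      have he2 : (0:ℝ) < e ^ 2 := by positivity
      have hc2 : (0:ℝ) < ((∏ i : Fin (r+1), C₀ (Fin.castLE hrn i) (Fin.castLE hrn i)) *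
           (∏ i : Fin r, C₀ (Fin.castLE hrn' i) (Fin.castLE hrn' i))) ^ 2 := by positivity
      constructor <;> intro h <;> nlinarith [key, he2, hc2]
    -- elimination of row/column q
    set w : Fin n → ℝ := fun j => if q < j then -(M q j) / p else 0 with hw
    set E : Matrix (Fin n) (Fin n) ℝ :=
      Matrix.of (fun i j => (if i = q then (1:ℝ) else 0) * w j) with hE
    have hwq : w q = 0 := by rw [hw]; simp
    set C₂ : Matrix (Fin n) (Fin n) ℝ := 1 + E with hC₂
    have hME : ∀ (N : Matrix (Fin n) (Fin n) ℝ) (i j : Fin n), (N * E) i j = N i q * w j := by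
      intro N i j
      simp [hE, Matrix.mul_apply, mul_comm, ← mul_assoc, mul_ite, mul_one, mul_zero,
        ite_mul, one_mul, zero_mul, Finset.sum_ite_eq', Finset.mem_univ]
    have hEN : ∀ (N : Matrix (Fin n) (Fin n) ℝ) (i j : Fin n), (Eᵀ * N) i j = w i * N q j := by
      intro N i j
      simp [hE, Matrix.mul_apply, Matrix.transpose_apply, mul_ite, mul_one, mul_zero,
        ite_mul, one_mul, zero_mul, Finset.sum_ite_eq', Finset.mem_univ, mul_comm]
    set M₁ : Matrix (Fin n) (Fin n) ℝ := C₂ᵀ * M * C₂ with hM₁def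
    have hM₁ : ∀ i j : Fin n, M₁ i j = M i j + M i q * w j + w i * M q j + w i * (M q q * w j) := by
      intro i j
      have expand : M₁ = M + Eᵀ * M + M * E + Eᵀ * (M * E) := by
        rw [hM₁def, hC₂]
        simp only [Matrix.transpose_add, Matrix.transpose_one, Matrix.add_mul, Matrix.mul_add,
          Matrix.one_mul, Matrix.mul_one]
        noncomm_ring
      rw [expand]
      simp only [Matrix.add_apply, hEN, hME]
      ring
    have hM₁symm : M₁.IsSymm := by
      rw [Matrix.IsSymm] at hMsymm ⊢
      rw [hM₁def]
      simp only [Matrix.transpose_mul, Matrix.transpose_transpose, hMsymm, Matrix.mul_assoc]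
    -- zeros of M₁
    have hz₁ : ∀ i j : Fin n, i ≠ j → ((i:ℕ) < r + 1 ∨ (j:ℕ) < r + 1) → M₁ i j = 0 := by
      have zlt : ∀ i j : Fin n, i ≠ j → (i:ℕ) < r → M₁ i j = 0 := by
        intro i j hij hi
        have hwi : w i = 0 := by
          rw [hw]; simp only [hq]; rw [if_neg]; rw [Fin.lt_def]; simp; omega
        have h1 : M i q = 0 := hz₀ i q (by intro h; rw [h] at hi; simp [hq] at hi) (Or.inl hi)
        have h2 : M i j = 0 := hz₀ i j hij (Or.inl hi)
        rw [hM₁ i j, h1, h2, hwi]; ring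
      have zltr : ∀ i j : Fin n, i ≠ j → (j:ℕ) < r → M₁ i j = 0 := by
        intro i j hij hj
        have hwj : w j = 0 := by
          rw [hw]; simp only [hq]; rw [if_neg]; rw [Fin.lt_def]; simp; omega
        have h1 : M q j = 0 := hz₀ q j (by intro h; rw [← h] at hj; simp [hq] at hj) (Or.inr hj)
        have h2 : M i j = 0 := hz₀ i j hij (Or.inr hj)
        rw [hM₁ i j, h1, h2, hwj]; ring
      intro i j hij hcase
      by_cases hi : (i:ℕ) < r
      · exact zlt i j hij hi
      by_cases hj : (j:ℕ) < r
      · exact zltr i j hij hj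
      -- now i, j both have val ≥ r, and one of them has val = r i.e. equals q
      have hiq : i = q ∨ q < i := by
        rcases Nat.lt_or_ge r (i:ℕ) with h | h
        · right; rw [Fin.lt_def]; simpa [hq]
        · left; apply Fin.ext; simp [hq]; omega
      have hjq : j = q ∨ q < j := by
        rcases Nat.lt_or_ge r (j:ℕ) with h | h
        · right; rw [Fin.lt_def]; simpa [hq]
        · left; apply Fin.ext; simp [hq]; omega
      rcases hiq with hiq | hiq
      · -- i = q, j > q (j ≠ q since i ≠ j)
        rcases hjq with hjq | hjq
        · exact absurd (hiq.trans hjq.symm) hij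
        have hwj : w j = -(M q j) / p := by rw [hw]; simp [hjq]
        rw [hM₁ i j, hiq, hwq, hwj, ← hp]
        field_simp
        try ring
      · rcases hjq with hjq | hjq
        · -- j = q, i > q
          have hwi : w i = -(M q i) / p := by rw [hw]; simp [hiq]
          rw [hM₁ i j, hjq, hwq, hwi, hMsymm.apply q i, ← hp]
          field_simp
          try ring
        · -- both > q : contradiction with hcase
          rw [Fin.lt_def] at hiq hjq
          simp [hq] at hiq hjq
          omega
    have hdg₁ : ∀ i : Fin n, (i:ℕ) < r → M₁ i i = eps A i := by
      intro i hi
      have hwi : w i = 0 := by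
        rw [hw]; simp only [hq]; rw [if_neg]; rw [Fin.lt_def]; simp; omega
      have h1 : M i q = 0 := hz₀ i q (by intro h; rw [h] at hi; simp [hq] at hi) (Or.inl hi)
      rw [hM₁ i i, h1, hwi, hdg₀ i hi]; ring
    have hM₁qq : M₁ q q = p := by
      rw [hM₁ q q, hwq, hp]; ring
    -- scaling
    set t : ℝ := (Real.sqrt |p|)⁻¹ with ht
    have htne : t ≠ 0 := by
      rw [ht]
      exact inv_ne_zero (by positivity)
    have ht2 : t ^ 2 = |p|⁻¹ := by
      rw [ht, inv_pow, Real.sq_sqrt (abs_nonneg p)]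
    set d : Fin n → ℝ := fun i => if i = q then t else 1 with hd
    set C₃ : Matrix (Fin n) (Fin n) ℝ := Matrix.diagonal d with hC₃
    have hC₃conj : ∀ (N : Matrix (Fin n) (Fin n) ℝ) (i j : Fin n),
        (C₃ᵀ * N * C₃) i j = d i * N i j * d j := by
      intro N i j
      rw [hC₃, Matrix.diagonal_transpose, Matrix.mul_apply]
      simp [Matrix.mul_diagonal, Matrix.diagonal_apply, ite_mul, zero_mul,
        Finset.sum_ite_eq, Finset.mem_univ]
      try ring
    -- final matrix
    have hC₂t : C₂.BlockTriangular id := by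
      intro i j hij
      have hij' : j < i := hij
      rw [hC₂, Matrix.add_apply, Matrix.one_apply_ne (ne_of_gt hij'), hE]
      simp only [Matrix.of_apply]
      by_cases hiq : i = q
      · rw [if_pos hiq, hw]
        simp only
        rw [if_neg (by rw [← hiq]; exact not_lt.mpr (le_of_lt hij'))]
        ring
      · rw [if_neg hiq]; ring
    have hC₃t : C₃.BlockTriangular id := by rw [hC₃]; exact blockTriangular_diagonal d
    have hC₂diag : ∀ i, C₂ i i = 1 := by
      intro i
      rw [hC₂, Matrix.add_apply, Matrix.one_apply_eq, hE]
      simp only [Matrix.of_apply]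
      by_cases hiq : i = q
      · rw [if_pos hiq, hiq, hwq]; ring
      · rw [if_neg hiq]; ring
    have hC₃diag : ∀ i, C₃ i i = d i := by
      intro i; rw [hC₃, Matrix.diagonal_apply_eq]
    have hdq : d q = t := by simp [hd]
    have hdne : ∀ i, d i ≠ 0 := by
      intro i; simp only [hd]; split
      · exact htne
      · exact one_ne_zero
    have hfinal : (C₀ * C₂ * C₃)ᵀ * A * (C₀ * C₂ * C₃) = C₃ᵀ * M₁ * C₃ := by
      rw [hM₁def, hMdef]
      simp only [Matrix.transpose_mul, Matrix.mul_assoc]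
    refine ⟨C₀ * C₂ * C₃, (ht₀.mul hC₂t).mul hC₃t, ?_, ?_, ?_⟩
    · intro i
      rw [diag_mul (ht₀.mul hC₂t) hC₃t, diag_mul ht₀ hC₂t, hC₂diag, hC₃diag]
      exact mul_ne_zero (mul_ne_zero (hd₀ i) one_ne_zero) (hdne i)
    · intro i j hij hcase
      rw [hfinal, hC₃conj, hz₁ i j hij hcase]
      ring
    · intro i hi
      rw [hfinal, hC₃conj]
      by_cases hir : (i:ℕ) < r
      · have hiq : i ≠ q := by intro h; rw [h] at hir; simp [hq] at hir
        have hdi : d i = 1 := by simp [hd, hiq]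
        rw [hdi, hdg₁ i hir]
        ring
      · have hiq : i = q := by apply Fin.ext; simp [hq]; omega
        subst hiq
        rw [hdq, hM₁qq]
        have hqv : ((q : Fin n) : ℕ) = r := rfl
        rw [hqv]
        have : t * p * t = p * t ^ 2 := by ring
        rw [this, ht2, eps]
        rcases lt_trichotomy p 0 with hneg | h0 | hpos
        · rw [if_neg (fun hc => absurd (hsign.mpr hc) (not_lt.mpr (le_of_lt hneg))),
            abs_of_neg hneg]
          field_simp
        · exact absurd h0 hpne
        · rw [if_pos (hsign.mp hpos), abs_of_pos hpos]
          field_simp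

end BorelAux

namespace BorelAux
variable {n : ℕ}

lemma pos_mul_iff_of {x y x' y' : ℝ} (hx : x ≠ 0) (hy : y ≠ 0) (hx' : x' ≠ 0) (hy' : y' ≠ 0)
    (h1 : 0 < x ↔ 0 < x') (h2 : 0 < y ↔ 0 < y') : (0 < x * y ↔ 0 < x' * y') := by
  have e1 : x < 0 ↔ ¬ 0 < x := ⟨fun h h' => absurd h (not_lt.mpr h'.le), fun h => hx.lt_or_gt.resolve_right h⟩
  have e2 : y < 0 ↔ ¬ 0 < y := ⟨fun h h' => absurd h (not_lt.mpr h'.le), fun h => hy.lt_or_gt.resolve_right h⟩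
  have e3 : x' < 0 ↔ ¬ 0 < x' := ⟨fun h h' => absurd h (not_lt.mpr h'.le), fun h => hx'.lt_or_gt.resolve_right h⟩
  have e4 : y' < 0 ↔ ¬ 0 < y' := ⟨fun h h' => absurd h (not_lt.mpr h'.le), fun h => hy'.lt_or_gt.resolve_right h⟩
  rw [mul_pos_iff, mul_pos_iff, e1, e2, e3, e4]
  tauto

lemma reduce_full (r : ℕ) (hrn : r ≤ n) (A : Matrix (Fin n) (Fin n) ℝ) (hA : A.IsSymm)
    (hrk : A.rank = r) (hΔ : ∀ k, 1 ≤ k → k ≤ r → dd A k ≠ 0) :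
    ∃ C : Matrix (Fin n) (Fin n) ℝ, C.BlockTriangular id ∧ C.det ≠ 0 ∧
      Cᵀ * A * C = Matrix.diagonal (fun i : Fin n => if (i:ℕ) < r then eps A i else 0) := by
  obtain ⟨C, hCt, hCd, hz, hdg⟩ := reduce r hrn A hA hΔ
  have hdet : C.det ≠ 0 := by
    rw [det_of_upperTriangular hCt]
    exact Finset.prod_ne_zero_iff.mpr fun i _ => hCd i
  set M : Matrix (Fin n) (Fin n) ℝ := Cᵀ * A * C with hMdef
  have hrkM : M.rank = r := by
    rw [hMdef, Matrix.rank_mul_eq_left_of_isUnit_det C (Cᵀ * A) (isUnit_iff_ne_zero.mpr hdet),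
      Matrix.rank_mul_eq_right_of_isUnit_det Cᵀ A
        (by rw [Matrix.det_transpose]; exact isUnit_iff_ne_zero.mpr hdet), hrk]
  have hbig : ∀ i j : Fin n, r ≤ (i:ℕ) → r ≤ (j:ℕ) → M i j = 0 := by
    intro i j hi hj
    by_contra hMij
    set f : Fin (r+1) → Fin n :=
      fun a => if h : (a:ℕ) < r then ⟨(a:ℕ), lt_of_lt_of_le h hrn⟩ else i with hf
    set g : Fin (r+1) → Fin n :=
      fun a => if h : (a:ℕ) < r then ⟨(a:ℕ), lt_of_lt_of_le h hrn⟩ else j with hg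
    set N := M.submatrix f g with hN
    have hNdiag : N = Matrix.diagonal
        (fun a : Fin (r+1) => if (a:ℕ) < r then eps A a else M i j) := by
      ext a b
      by_cases hab : a = b
      · subst hab
        rw [Matrix.diagonal_apply_eq, hN, Matrix.submatrix_apply, hf, hg]
        simp only
        by_cases h : (a:ℕ) < r
        · rw [dif_pos h, dif_pos h, if_pos h]
          exact hdg _ h
        · rw [dif_neg h, dif_neg h, if_neg h]
      · rw [Matrix.diagonal_apply_ne _ hab, hN, Matrix.submatrix_apply, hf, hg]
        simp only
        have hab' : (a:ℕ) ≠ (b:ℕ) := fun h => hab (Fin.ext h)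
        by_cases h1 : (a:ℕ) < r <;> by_cases h2 : (b:ℕ) < r
        · rw [dif_pos h1, dif_pos h2]
          exact hz _ _ (fun h => hab' (by simpa [Fin.ext_iff] using h)) (Or.inl h1)
        · rw [dif_pos h1, dif_neg h2]
          exact hz _ _ (fun h => by rw [← h] at hj; simp at hj; omega) (Or.inl h1)
        · rw [dif_neg h1, dif_pos h2]
          exact hz _ _ (fun h => by rw [h] at hi; simp at hi; omega) (Or.inr h2)
        · exfalso
          have := a.2; have := b.2
          omega
    have hdetN : N.det ≠ 0 := by
      rw [hNdiag, Matrix.det_diagonal]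
      refine Finset.prod_ne_zero_iff.mpr fun a _ => ?_
      by_cases h : (a:ℕ) < r
      · rw [if_pos h]; exact eps_ne_zero A a
      · rw [if_neg h]; exact hMij
    have hrkN : N.rank = r + 1 := by
      rw [Matrix.rank_of_isUnit N ((Matrix.isUnit_iff_isUnit_det N).mpr
        (isUnit_iff_ne_zero.mpr hdetN))]
      simp
    have hle := rank_submatrix_le' M f g
    rw [← hN, hrkN, hrkM] at hle
    omega
  refine ⟨C, hCt, hdet, ?_⟩
  ext i j
  by_cases hij : i = j
  · subst hij
    rw [Matrix.diagonal_apply_eq]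
    by_cases h : (i:ℕ) < r
    · rw [if_pos h]; exact hdg i h
    · rw [if_neg h]; exact hbig i i (not_lt.mp h) (not_lt.mp h)
  · rw [Matrix.diagonal_apply_ne _ hij]
    by_cases h : (i:ℕ) < r ∨ (j:ℕ) < r
    · exact hz i j hij h
    · push_neg at h; exact hbig i j h.1 h.2

end BorelAux

open BorelAux

/-- Section 6.1 (open real Borel orbits): two real symmetric `n×n` matrices of rank `r`
with nonzero leading principal minors `Δ₁, …, Δ_r` are congruent via an invertible upper
triangular real matrix iff `Δ_k(A)` and `Δ_k(B)` have the same sign for every `1 ≤ k ≤ r`. -/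
theorem real_borel_orbit_iff_minor_signs (n r : ℕ) (hrn : r ≤ n)
    (A B : Matrix (Fin n) (Fin n) ℝ) (hA : A.IsSymm) (hB : B.IsSymm)
    (hrA : A.rank = r) (hrB : B.rank = r)
    (hΔA : ∀ (k : ℕ) (_ : 1 ≤ k) (h2 : k ≤ r), leadingMinor A k (h2.trans hrn) ≠ 0)
    (hΔB : ∀ (k : ℕ) (_ : 1 ≤ k) (h2 : k ≤ r), leadingMinor B k (h2.trans hrn) ≠ 0) :
    (∃ C : Matrix (Fin n) (Fin n) ℝ, C.det ≠ 0 ∧ C.BlockTriangular id ∧ Cᵀ * A * C = B) ↔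
      ∀ (k : ℕ) (_ : 1 ≤ k) (h2 : k ≤ r),
        (0 < leadingMinor A k (h2.trans hrn) ↔ 0 < leadingMinor B k (h2.trans hrn)) := by
  constructor
  · rintro ⟨C, hdet, hCt, hCAC⟩ k h1 h2
    have hconj := leadingMinor_conj A hCt k (h2.trans hrn)
    rw [hCAC] at hconj
    set s : ℝ := ∏ i : Fin k, C (Fin.castLE (h2.trans hrn) i) (Fin.castLE (h2.trans hrn) i)
      with hs
    have hsne : s ≠ 0 := by
      rw [hs]
      refine Finset.prod_ne_zero_iff.mpr fun i _ => ?_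
      have := det_of_upperTriangular hCt
      rw [this] at hdet
      exact Finset.prod_ne_zero_iff.mp hdet _ (Finset.mem_univ _)
    have hsq : (0:ℝ) < s ^ 2 := lt_of_le_of_ne (sq_nonneg s) (Ne.symm (pow_ne_zero 2 hsne))
    rw [hconj]
    constructor
    · intro h; exact mul_pos hsq h
    · intro h; nlinarith
  · intro hsame
    have hΔA' : ∀ k, 1 ≤ k → k ≤ r → dd A k ≠ 0 := by
      intro k h1 h2
      rw [dd_eq A k (h2.trans hrn)]
      exact hΔA k h1 h2
    have hΔB' : ∀ k, 1 ≤ k → k ≤ r → dd B k ≠ 0 := by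
      intro k h1 h2
      rw [dd_eq B k (h2.trans hrn)]
      exact hΔB k h1 h2
    have hepseq : ∀ k : ℕ, k + 1 ≤ r → eps A k = eps B k := by
      intro k hk
      have hk1 : (0 < dd A (k+1) ↔ 0 < dd B (k+1)) := by
        rw [dd_eq A (k+1) (hk.trans hrn), dd_eq B (k+1) (hk.trans hrn)]
        exact hsame (k+1) (by omega) hk
      have hk0 : (0 < dd A k ↔ 0 < dd B k) := by
        rcases Nat.eq_zero_or_pos k with h | h
        · rw [h, dd_zero, dd_zero]
        · have hkr : k ≤ r := by omega
          rw [dd_eq A k (hkr.trans hrn), dd_eq B k (hkr.trans hrn)]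
          exact hsame k h hkr
      have hAne : dd A k ≠ 0 := by
        rcases Nat.eq_zero_or_pos k with h | h
        · rw [h, dd_zero]; norm_num
        · exact hΔA' k h (by omega)
      have hBne : dd B k ≠ 0 := by
        rcases Nat.eq_zero_or_pos k with h | h
        · rw [h, dd_zero]; norm_num
        · exact hΔB' k h (by omega)
      rw [eps, eps, if_congr (pos_mul_iff_of (hΔA' (k+1) (by omega) hk) hAne
        (hΔB' (k+1) (by omega) hk) hBne hk1 hk0) rfl rfl]
    obtain ⟨CA, hCAt, hCAdet, hCAeq⟩ := reduce_full r hrn A hA hrA hΔA'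
    obtain ⟨CB, hCBt, hCBdet, hCBeq⟩ := reduce_full r hrn B hB hrB hΔB'
    have hfun : (fun i : Fin n => if (i:ℕ) < r then eps A i else 0)
        = (fun i : Fin n => if (i:ℕ) < r then eps B i else 0) := by
      funext i
      by_cases h : (i:ℕ) < r
      · rw [if_pos h, if_pos h, hepseq i h]
      · rw [if_neg h, if_neg h]
    have hDeq : Matrix.diagonal (fun i : Fin n => if (i:ℕ) < r then eps A i else 0)
        = Matrix.diagonal (fun i : Fin n => if (i:ℕ) < r then eps B i else 0) :=
      congrArg Matrix.diagonal hfun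
    have hu : IsUnit CB.det := isUnit_iff_ne_zero.mpr hCBdet
    haveI : Invertible CB := CB.invertibleOfIsUnitDet hu
    refine ⟨CA * CB⁻¹, ?_, ?_, ?_⟩
    · rw [Matrix.det_mul, Matrix.det_nonsing_inv, Ring.inverse_eq_inv']
      exact mul_ne_zero hCAdet (inv_ne_zero hCBdet)
    · exact hCAt.mul (blockTriangular_inv_of_blockTriangular hCBt)
    · have e1 : (CA * CB⁻¹)ᵀ * A * (CA * CB⁻¹) = (CB⁻¹)ᵀ * (CAᵀ * A * CA) * CB⁻¹ := by
        simp only [Matrix.transpose_mul, Matrix.mul_assoc]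
      rw [e1, hCAeq, hDeq, ← hCBeq]
      have e2 : (CB⁻¹)ᵀ * CBᵀ = 1 := by
        rw [← Matrix.transpose_mul, Matrix.mul_nonsing_inv CB hu, Matrix.transpose_one]
      calc (CB⁻¹)ᵀ * (CBᵀ * B * CB) * CB⁻¹
          = ((CB⁻¹)ᵀ * CBᵀ) * B * (CB * CB⁻¹) := by simp only [Matrix.mul_assoc]
        _ = B := by rw [e2, Matrix.mul_nonsing_inv CB hu, Matrix.one_mul, Matrix.mul_one]
end

section
/- Let m ∈ ℕ and let c : ℝ^m → ℝ be a nonzero linear map. Then the subset S = {(a, b, z) ∈ ℝ × ℝ × ℝ^m : b² − a² − c(z)² ≠ 0 and a ≠ b and a ≠ −b}, with the subspace topology, has exactly eight connected components. -/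
open Set

namespace PS8

variable {m : ℕ} (c : (Fin m → ℝ) →ₗ[ℝ] ℝ)

abbrev E (m : ℕ) : Type := ℝ × ℝ × (Fin m → ℝ)

def U : Fin 8 → Set (E m) := fun i =>
  match i with
  | 0 => {p | p.2.1 < p.1 ∧ -p.2.1 < p.1}
  | 1 => {p | p.1 < p.2.1 ∧ p.1 < -p.2.1}
  | 2 => {p | p.1 < p.2.1 ∧ -p.1 < p.2.1 ∧ 0 < p.2.1^2 - p.1^2 - (c p.2.2)^2}
  | 3 => {p | p.1 < p.2.1 ∧ -p.1 < p.2.1 ∧ p.2.1^2 - p.1^2 - (c p.2.2)^2 < 0 ∧ 0 < c p.2.2}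
  | 4 => {p | p.1 < p.2.1 ∧ -p.1 < p.2.1 ∧ p.2.1^2 - p.1^2 - (c p.2.2)^2 < 0 ∧ c p.2.2 < 0}
  | 5 => {p | p.2.1 < p.1 ∧ p.2.1 < -p.1 ∧ 0 < p.2.1^2 - p.1^2 - (c p.2.2)^2}
  | 6 => {p | p.2.1 < p.1 ∧ p.2.1 < -p.1 ∧ p.2.1^2 - p.1^2 - (c p.2.2)^2 < 0 ∧ 0 < c p.2.2}
  | 7 => {p | p.2.1 < p.1 ∧ p.2.1 < -p.1 ∧ p.2.1^2 - p.1^2 - (c p.2.2)^2 < 0 ∧ c p.2.2 < 0}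

lemma isOpen_U (i : Fin 8) : IsOpen (U c i) := by
  have hc : Continuous fun p : E m => c p.2.2 :=
    c.continuous_of_finiteDimensional.comp (continuous_snd.comp continuous_snd)
  have ha : Continuous fun p : E m => p.1 := continuous_fst
  have hb : Continuous fun p : E m => p.2.1 := continuous_fst.comp continuous_snd
  have hQ : Continuous fun p : E m => p.2.1^2 - p.1^2 - (c p.2.2)^2 :=
    ((hb.pow 2).sub (ha.pow 2)).sub (hc.pow 2)
  have hz : Continuous fun _ : E m => (0:ℝ) := continuous_const
  fin_cases i <;> simp only [U]
  · exact (isOpen_lt hb ha).inter (isOpen_lt hb.neg ha)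
  · exact (isOpen_lt ha hb).inter (isOpen_lt ha hb.neg)
  · exact (isOpen_lt ha hb).inter ((isOpen_lt ha.neg hb).inter (isOpen_lt hz hQ))
  · exact (isOpen_lt ha hb).inter ((isOpen_lt ha.neg hb).inter ((isOpen_lt hQ hz).inter (isOpen_lt hz hc)))
  · exact (isOpen_lt ha hb).inter ((isOpen_lt ha.neg hb).inter ((isOpen_lt hQ hz).inter (isOpen_lt hc hz)))
  · exact (isOpen_lt hb ha).inter ((isOpen_lt hb ha.neg).inter (isOpen_lt hz hQ))
  · exact (isOpen_lt hb ha).inter ((isOpen_lt hb ha.neg).inter ((isOpen_lt hQ hz).inter (isOpen_lt hz hc)))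
  · exact (isOpen_lt hb ha).inter ((isOpen_lt hb ha.neg).inter ((isOpen_lt hQ hz).inter (isOpen_lt hc hz)))

lemma mem_unique {p : E m} {i j : Fin 8} (hi : p ∈ U c i) (hj : p ∈ U c j) : i = j := by
  fin_cases i <;> fin_cases j <;> simp_all only [U, mem_setOf_eq] <;>
    first | rfl | (exfalso; linarith)

lemma mem_total {p : E m}
    (hp : p.2.1 ^ 2 - p.1 ^ 2 - (c p.2.2) ^ 2 ≠ 0 ∧ p.1 ≠ p.2.1 ∧ p.1 ≠ -p.2.1) :
    ∃ i, p ∈ U c i := by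
  obtain ⟨hQ, h1, h2⟩ := hp
  rcases lt_or_gt_of_ne h1 with h1 | h1 <;> rcases lt_or_gt_of_ne h2 with h2 | h2
  · exact ⟨1, h1, h2⟩
  · have hab : -p.1 < p.2.1 := by linarith
    rcases hQ.lt_or_gt with hq | hq
    · have hw : c p.2.2 ≠ 0 := by
        intro h0; rw [h0] at hq; nlinarith
      rcases hw.lt_or_gt with hw | hw
      · exact ⟨4, h1, hab, hq, hw⟩
      · exact ⟨3, h1, hab, hq, hw⟩
    · exact ⟨2, h1, hab, hq⟩
  · have hab : p.2.1 < -p.1 := by linarith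
    rcases hQ.lt_or_gt with hq | hq
    · have hw : c p.2.2 ≠ 0 := by
        intro h0; rw [h0] at hq; nlinarith
      rcases hw.lt_or_gt with hw | hw
      · exact ⟨7, h1, hab, hq, hw⟩
      · exact ⟨6, h1, hab, hq, hw⟩
    · exact ⟨5, h1, hab, hq⟩
  · exact ⟨0, h1, h2⟩

lemma subset_S (i : Fin 8) :
    U c i ⊆ {p : E m | p.2.1 ^ 2 - p.1 ^ 2 - (c p.2.2) ^ 2 ≠ 0 ∧ p.1 ≠ p.2.1 ∧ p.1 ≠ -p.2.1} := by
  fin_cases i <;> intro p hp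
  · obtain ⟨h1, h2⟩ := hp
    refine ⟨?_, ?_, ?_⟩
    · intro h
      nlinarith [sq_nonneg (c p.2.2), mul_pos (show (0:ℝ) < p.1 - p.2.1 by linarith)
        (show (0:ℝ) < p.1 + p.2.1 by linarith)]
    · intro h; linarith
    · intro h; linarith
  · obtain ⟨h1, h2⟩ := hp
    refine ⟨?_, ?_, ?_⟩
    · intro h
      nlinarith [sq_nonneg (c p.2.2), mul_pos (show (0:ℝ) < p.2.1 - p.1 by linarith)
        (show (0:ℝ) < -p.2.1 - p.1 by linarith)]
    · intro h; linarith
    · intro h; linarith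
  · obtain ⟨h1, h2, h3⟩ := hp
    exact ⟨ne_of_gt h3, ne_of_lt h1, by intro h; linarith⟩
  · obtain ⟨h1, h2, h3, h4⟩ := hp
    exact ⟨ne_of_lt h3, ne_of_lt h1, by intro h; linarith⟩
  · obtain ⟨h1, h2, h3, h4⟩ := hp
    exact ⟨ne_of_lt h3, ne_of_lt h1, by intro h; linarith⟩
  · obtain ⟨h1, h2, h3⟩ := hp
    exact ⟨ne_of_gt h3, ne_of_gt h1, by intro h; linarith⟩
  · obtain ⟨h1, h2, h3, h4⟩ := hp
    exact ⟨ne_of_lt h3, ne_of_gt h1, by intro h; linarith⟩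
  · obtain ⟨h1, h2, h3, h4⟩ := hp
    exact ⟨ne_of_lt h3, ne_of_gt h1, by intro h; linarith⟩

lemma nonempty_U (z₀ : Fin m → ℝ) (hz₀ : c z₀ = 1) (i : Fin 8) : (U c i).Nonempty := by
  fin_cases i
  · exact ⟨(1, 0, 0), by norm_num, by norm_num⟩
  · exact ⟨(-1, 0, 0), by norm_num, by norm_num⟩
  · exact ⟨(0, 1, 0), by norm_num, by norm_num, by norm_num [map_zero]⟩
  · exact ⟨(0, 2, (3:ℝ) • z₀), by norm_num, by norm_num,
      by norm_num [map_smul, smul_eq_mul, hz₀], by norm_num [map_smul, smul_eq_mul, hz₀]⟩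
  · exact ⟨(0, 2, (-3:ℝ) • z₀), by norm_num, by norm_num,
      by norm_num [map_smul, smul_eq_mul, hz₀], by norm_num [map_smul, smul_eq_mul, hz₀]⟩
  · exact ⟨(0, -1, 0), by norm_num, by norm_num, by norm_num [map_zero]⟩
  · exact ⟨(0, -2, (3:ℝ) • z₀), by norm_num, by norm_num,
      by norm_num [map_smul, smul_eq_mul, hz₀], by norm_num [map_smul, smul_eq_mul, hz₀]⟩
  · exact ⟨(0, -2, (-3:ℝ) • z₀), by norm_num, by norm_num,
      by norm_num [map_smul, smul_eq_mul, hz₀], by norm_num [map_smul, smul_eq_mul, hz₀]⟩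

lemma combo_lt {x1 x2 y1 y2 t s : ℝ} (h1 : x1 < y1) (h2 : x2 < y2)
    (ht : 0 ≤ t) (hs : 0 ≤ s) (hts : t + s = 1) : t*x1 + s*x2 < t*y1 + s*y2 := by
  rcases eq_or_lt_of_le ht with h | h
  · have hs1 : s = 1 := by linarith
    rw [← h, hs1]; norm_num; exact h2
  · have a1 := mul_lt_mul_of_pos_left h1 h
    have a2 := mul_le_mul_of_nonneg_left h2.le hs
    linarith

lemma star_preconn {U V : Set (E m)} (hV : Convex ℝ V) (x₀ : E m) (hx₀ : x₀ ∈ V) (hVU : V ⊆ U)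
    (h : ∀ p ∈ U, ∃ q ∈ V, segment ℝ p q ⊆ U) : IsPreconnected U := by
  choose q hqV hseg using h
  have hU : U = ⋃₀ (Set.range fun p : {x // x ∈ U} => segment ℝ p.1 (q p.1 p.2) ∪ V) := by
    ext x
    rw [sUnion_range, mem_iUnion]
    constructor
    · intro hx
      exact ⟨⟨x, hx⟩, mem_union_left V (left_mem_segment ℝ _ _)⟩
    · rintro ⟨p, hp | hp⟩
      · exact hseg p.1 p.2 hp
      · exact hVU hp
  rw [hU]
  refine isPreconnected_sUnion x₀ _ ?_ ?_
  · rintro s ⟨p, rfl⟩; exact mem_union_right _ hx₀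
  · rintro s ⟨p, rfl⟩
    exact IsPreconnected.union (q p.1 p.2) (right_mem_segment ℝ _ _) (hqV p.1 p.2)
      (convex_segment _ _).isPreconnected hV.isPreconnected

-- convexity of the two "cone" regions
lemma preconn_U0 : IsPreconnected (U c (0 : Fin 8)) := by
  refine Convex.isPreconnected ?_
  intro x hx y hy t s ht hs hts
  obtain ⟨h1, h2⟩ := hx; obtain ⟨k1, k2⟩ := hy
  refine ⟨?_, ?_⟩ <;>
    simp only [Prod.fst_add, Prod.snd_add, Prod.smul_fst, Prod.smul_snd, smul_eq_mul]
  · exact combo_lt h1 k1 ht hs hts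
  · have := combo_lt h2 k2 ht hs hts; linarith

lemma preconn_U1 : IsPreconnected (U c (1 : Fin 8)) := by
  refine Convex.isPreconnected ?_
  intro x hx y hy t s ht hs hts
  obtain ⟨h1, h2⟩ := hx; obtain ⟨k1, k2⟩ := hy
  refine ⟨?_, ?_⟩ <;>
    simp only [Prod.fst_add, Prod.snd_add, Prod.smul_fst, Prod.smul_snd, smul_eq_mul]
  · exact combo_lt h1 k1 ht hs hts
  · have := combo_lt h2 k2 ht hs hts; linarith

lemma preconn_U2 : IsPreconnected (U c (2 : Fin 8)) := by
  refine star_preconn (V := {p : E m | p.1 < p.2.1 ∧ -p.1 < p.2.1 ∧ c p.2.2 = 0})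
    ?_ ((0:ℝ), (1:ℝ), (0 : Fin m → ℝ)) ⟨by norm_num, by norm_num, by simp⟩ ?_ ?_
  · intro x hx y hy t s ht hs hts
    obtain ⟨h1, h2, h3⟩ := hx; obtain ⟨k1, k2, k3⟩ := hy
    refine ⟨?_, ?_, ?_⟩ <;>
      simp only [mem_setOf_eq, Prod.fst_add, Prod.snd_add, Prod.smul_fst, Prod.smul_snd,
        smul_eq_mul, map_add, map_smul, h3, k3, mul_zero, add_zero]
    · exact combo_lt h1 k1 ht hs hts
    · have := combo_lt h2 k2 ht hs hts; linarith
  · rintro p ⟨h1, h2, h3⟩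
    refine ⟨h1, h2, ?_⟩
    rw [h3]
    nlinarith [mul_pos (show (0:ℝ) < p.2.1 - p.1 by linarith) (show (0:ℝ) < p.2.1 + p.1 by linarith)]
  · rintro p ⟨h1, h2, h3⟩
    refine ⟨(p.1, p.2.1, (0 : Fin m → ℝ)), ⟨h1, h2, by simp⟩, ?_⟩
    rintro u ⟨t, s, ht, hs, hts, rfl⟩
    have e1 : (t • p + s • (p.1, p.2.1, (0 : Fin m → ℝ))).1 = p.1 := by
      simp only [Prod.fst_add, Prod.smul_fst, smul_eq_mul]
      linear_combination p.1 * hts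
    have e2 : (t • p + s • (p.1, p.2.1, (0 : Fin m → ℝ))).2.1 = p.2.1 := by
      simp only [Prod.snd_add, Prod.smul_snd, Prod.fst_add, Prod.smul_fst, smul_eq_mul]
      linear_combination p.2.1 * hts
    have e3 : c (t • p + s • (p.1, p.2.1, (0 : Fin m → ℝ))).2.2 = t * c p.2.2 := by
      simp only [Prod.snd_add, Prod.smul_snd, map_add, map_smul, smul_eq_mul, map_zero, mul_zero,
        add_zero]
    refine ⟨?_, ?_, ?_⟩
    · rw [e1, e2]; exact h1
    · rw [e1, e2]; exact h2
    · rw [e1, e2, e3]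
      have ht1 : t ≤ 1 := by linarith
      nlinarith [mul_nonneg (mul_nonneg (show (0:ℝ) ≤ 1 - t by linarith)
        (show (0:ℝ) ≤ 1 + t by linarith)) (sq_nonneg (c p.2.2))]

lemma preconn_U5 : IsPreconnected (U c (5 : Fin 8)) := by
  refine star_preconn (V := {p : E m | p.2.1 < p.1 ∧ p.2.1 < -p.1 ∧ c p.2.2 = 0})
    ?_ ((0:ℝ), (-1:ℝ), (0 : Fin m → ℝ)) ⟨by norm_num, by norm_num, by simp⟩ ?_ ?_
  · intro x hx y hy t s ht hs hts
    obtain ⟨h1, h2, h3⟩ := hx; obtain ⟨k1, k2, k3⟩ := hy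
    refine ⟨?_, ?_, ?_⟩ <;>
      simp only [mem_setOf_eq, Prod.fst_add, Prod.snd_add, Prod.smul_fst, Prod.smul_snd,
        smul_eq_mul, map_add, map_smul, h3, k3, mul_zero, add_zero]
    · exact combo_lt h1 k1 ht hs hts
    · have := combo_lt h2 k2 ht hs hts; linarith
  · rintro p ⟨h1, h2, h3⟩
    refine ⟨h1, h2, ?_⟩
    rw [h3]
    nlinarith [mul_pos (show (0:ℝ) < p.1 - p.2.1 by linarith) (show (0:ℝ) < -p.1 - p.2.1 by linarith)]
  · rintro p ⟨h1, h2, h3⟩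
    refine ⟨(p.1, p.2.1, (0 : Fin m → ℝ)), ⟨h1, h2, by simp⟩, ?_⟩
    rintro u ⟨t, s, ht, hs, hts, rfl⟩
    have e1 : (t • p + s • (p.1, p.2.1, (0 : Fin m → ℝ))).1 = p.1 := by
      simp only [Prod.fst_add, Prod.smul_fst, smul_eq_mul]
      linear_combination p.1 * hts
    have e2 : (t • p + s • (p.1, p.2.1, (0 : Fin m → ℝ))).2.1 = p.2.1 := by
      simp only [Prod.snd_add, Prod.smul_snd, Prod.fst_add, Prod.smul_fst, smul_eq_mul]
      linear_combination p.2.1 * hts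
    have e3 : c (t • p + s • (p.1, p.2.1, (0 : Fin m → ℝ))).2.2 = t * c p.2.2 := by
      simp only [Prod.snd_add, Prod.smul_snd, map_add, map_smul, smul_eq_mul, map_zero, mul_zero,
        add_zero]
    refine ⟨?_, ?_, ?_⟩
    · rw [e1, e2]; exact h1
    · rw [e1, e2]; exact h2
    · rw [e1, e2, e3]
      have ht1 : t ≤ 1 := by linarith
      nlinarith [mul_nonneg (mul_nonneg (show (0:ℝ) ≤ 1 - t by linarith)
        (show (0:ℝ) ≤ 1 + t by linarith)) (sq_nonneg (c p.2.2))]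

lemma preconn_U3 (z₀ : Fin m → ℝ) (hz₀ : c z₀ = 1) : IsPreconnected (U c (3 : Fin 8)) := by
  refine star_preconn
    (V := {p : E m | p.1 < p.2.1 ∧ -p.1 < p.2.1 ∧ p.1 + p.2.1 < c p.2.2 ∧ -p.1 + p.2.1 < c p.2.2})
    ?_ ((0:ℝ), (1:ℝ), (2:ℝ) • z₀) ⟨by norm_num, by norm_num,
      by norm_num [map_smul, smul_eq_mul, hz₀], by norm_num [map_smul, smul_eq_mul, hz₀]⟩ ?_ ?_
  · intro x hx y hy t s ht hs hts
    obtain ⟨h1, h2, h3, h4⟩ := hx; obtain ⟨k1, k2, k3, k4⟩ := hy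
    refine ⟨?_, ?_, ?_, ?_⟩ <;>
      simp only [mem_setOf_eq, Prod.fst_add, Prod.snd_add, Prod.smul_fst, Prod.smul_snd,
        smul_eq_mul, map_add, map_smul]
    · exact combo_lt h1 k1 ht hs hts
    · have := combo_lt h2 k2 ht hs hts; linarith
    · have := combo_lt h3 k3 ht hs hts; linarith
    · have := combo_lt h4 k4 ht hs hts; linarith
  · rintro p ⟨h1, h2, h3, h4⟩
    have hb : 0 < p.2.1 := by linarith
    have hw : p.2.1 < c p.2.2 := by linarith
    refine ⟨h1, h2, ?_, by linarith⟩
    nlinarith [mul_lt_mul'' hw hw hb.le hb.le, sq_nonneg p.1]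
  · rintro p ⟨h1, h2, h3, h4⟩
    have hT : (0:ℝ) < p.1^2 + p.2.1^2 + 2 := by positivity
    refine ⟨(p.1, p.2.1, p.2.2 + (p.1^2 + p.2.1^2 + 2) • z₀), ⟨h1, h2, ?_, ?_⟩, ?_⟩
    · simp only [map_add, map_smul, smul_eq_mul, hz₀, mul_one]
      nlinarith [sq_nonneg (p.1 - 1), sq_nonneg (p.2.1 - 1)]
    · simp only [map_add, map_smul, smul_eq_mul, hz₀, mul_one]
      nlinarith [sq_nonneg (p.1 + 1), sq_nonneg (p.2.1 - 1)]
    · rintro u ⟨t, s, ht, hs, hts, rfl⟩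
      set q : E m := (p.1, p.2.1, p.2.2 + (p.1^2 + p.2.1^2 + 2) • z₀) with hq
      have e1 : (t • p + s • q).1 = p.1 := by
        simp only [hq, Prod.fst_add, Prod.smul_fst, smul_eq_mul]
        linear_combination p.1 * hts
      have e2 : (t • p + s • q).2.1 = p.2.1 := by
        simp only [hq, Prod.snd_add, Prod.smul_snd, Prod.fst_add, Prod.smul_fst, smul_eq_mul]
        linear_combination p.2.1 * hts
      have e3 : c (t • p + s • q).2.2 = c p.2.2 + s * (p.1^2 + p.2.1^2 + 2) := by
        simp only [hq, Prod.snd_add, Prod.smul_snd, map_add, map_smul, smul_eq_mul, hz₀, mul_one]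
        linear_combination (c p.2.2) * hts
      have hsT : (0:ℝ) ≤ s * (p.1^2 + p.2.1^2 + 2) := mul_nonneg hs hT.le
      refine ⟨?_, ?_, ?_, ?_⟩
      · rw [e1, e2]; exact h1
      · rw [e1, e2]; exact h2
      · rw [e1, e2, e3]
        nlinarith [mul_nonneg hsT h4.le, sq_nonneg (s * (p.1^2 + p.2.1^2 + 2))]
      · rw [e3]; linarith

lemma preconn_U4 (z₀ : Fin m → ℝ) (hz₀ : c z₀ = 1) : IsPreconnected (U c (4 : Fin 8)) := by
  refine star_preconn
    (V := {p : E m | p.1 < p.2.1 ∧ -p.1 < p.2.1 ∧ p.1 + p.2.1 < -c p.2.2 ∧ -p.1 + p.2.1 < -c p.2.2})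
    ?_ ((0:ℝ), (1:ℝ), (-2:ℝ) • z₀) ⟨by norm_num, by norm_num,
      by norm_num [map_smul, smul_eq_mul, hz₀], by norm_num [map_smul, smul_eq_mul, hz₀]⟩ ?_ ?_
  · intro x hx y hy t s ht hs hts
    obtain ⟨h1, h2, h3, h4⟩ := hx; obtain ⟨k1, k2, k3, k4⟩ := hy
    refine ⟨?_, ?_, ?_, ?_⟩ <;>
      simp only [mem_setOf_eq, Prod.fst_add, Prod.snd_add, Prod.smul_fst, Prod.smul_snd,
        smul_eq_mul, map_add, map_smul]
    · exact combo_lt h1 k1 ht hs hts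
    · have := combo_lt h2 k2 ht hs hts; linarith
    · have := combo_lt h3 k3 ht hs hts; linarith
    · have := combo_lt h4 k4 ht hs hts; linarith
  · rintro p ⟨h1, h2, h3, h4⟩
    have hb : 0 < p.2.1 := by linarith
    have hw : p.2.1 < -c p.2.2 := by linarith
    refine ⟨h1, h2, ?_, by linarith⟩
    nlinarith [mul_lt_mul'' hw hw hb.le hb.le, sq_nonneg p.1]
  · rintro p ⟨h1, h2, h3, h4⟩
    have hT : (0:ℝ) < p.1^2 + p.2.1^2 + 2 := by positivity
    refine ⟨(p.1, p.2.1, p.2.2 - (p.1^2 + p.2.1^2 + 2) • z₀), ⟨h1, h2, ?_, ?_⟩, ?_⟩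
    · simp only [map_sub, map_smul, smul_eq_mul, hz₀, mul_one]
      nlinarith [sq_nonneg (p.1 - 1), sq_nonneg (p.2.1 - 1)]
    · simp only [map_sub, map_smul, smul_eq_mul, hz₀, mul_one]
      nlinarith [sq_nonneg (p.1 + 1), sq_nonneg (p.2.1 - 1)]
    · rintro u ⟨t, s, ht, hs, hts, rfl⟩
      set q : E m := (p.1, p.2.1, p.2.2 - (p.1^2 + p.2.1^2 + 2) • z₀) with hq
      have e1 : (t • p + s • q).1 = p.1 := by
        simp only [hq, Prod.fst_add, Prod.smul_fst, smul_eq_mul]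
        linear_combination p.1 * hts
      have e2 : (t • p + s • q).2.1 = p.2.1 := by
        simp only [hq, Prod.snd_add, Prod.smul_snd, Prod.fst_add, Prod.smul_fst, smul_eq_mul]
        linear_combination p.2.1 * hts
      have e3 : c (t • p + s • q).2.2 = c p.2.2 - s * (p.1^2 + p.2.1^2 + 2) := by
        simp only [hq, Prod.snd_add, Prod.smul_snd, map_add, map_sub, map_smul, smul_eq_mul, hz₀,
          mul_one]
        linear_combination (c p.2.2) * hts
      have hsT : (0:ℝ) ≤ s * (p.1^2 + p.2.1^2 + 2) := mul_nonneg hs hT.le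
      refine ⟨?_, ?_, ?_, ?_⟩
      · rw [e1, e2]; exact h1
      · rw [e1, e2]; exact h2
      · rw [e1, e2, e3]
        nlinarith [mul_nonneg hsT (show (0:ℝ) ≤ -c p.2.2 by linarith),
          sq_nonneg (s * (p.1^2 + p.2.1^2 + 2))]
      · rw [e3]; linarith

lemma preconn_U6 (z₀ : Fin m → ℝ) (hz₀ : c z₀ = 1) : IsPreconnected (U c (6 : Fin 8)) := by
  refine star_preconn
    (V := {p : E m | p.2.1 < p.1 ∧ p.2.1 < -p.1 ∧ p.1 - p.2.1 < c p.2.2 ∧ -p.1 - p.2.1 < c p.2.2})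
    ?_ ((0:ℝ), (-1:ℝ), (2:ℝ) • z₀) ⟨by norm_num, by norm_num,
      by norm_num [map_smul, smul_eq_mul, hz₀], by norm_num [map_smul, smul_eq_mul, hz₀]⟩ ?_ ?_
  · intro x hx y hy t s ht hs hts
    obtain ⟨h1, h2, h3, h4⟩ := hx; obtain ⟨k1, k2, k3, k4⟩ := hy
    refine ⟨?_, ?_, ?_, ?_⟩ <;>
      simp only [mem_setOf_eq, Prod.fst_add, Prod.snd_add, Prod.smul_fst, Prod.smul_snd,
        smul_eq_mul, map_add, map_smul]
    · exact combo_lt h1 k1 ht hs hts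
    · have := combo_lt h2 k2 ht hs hts; linarith
    · have := combo_lt h3 k3 ht hs hts; linarith
    · have := combo_lt h4 k4 ht hs hts; linarith
  · rintro p ⟨h1, h2, h3, h4⟩
    have hb : p.2.1 < 0 := by linarith
    have hw : -p.2.1 < c p.2.2 := by linarith
    refine ⟨h1, h2, ?_, by linarith⟩
    nlinarith [mul_lt_mul'' hw hw (by linarith : (0:ℝ) ≤ -p.2.1) (by linarith : (0:ℝ) ≤ -p.2.1),
      sq_nonneg p.1]
  · rintro p ⟨h1, h2, h3, h4⟩
    have hT : (0:ℝ) < p.1^2 + p.2.1^2 + 2 := by positivity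
    refine ⟨(p.1, p.2.1, p.2.2 + (p.1^2 + p.2.1^2 + 2) • z₀), ⟨h1, h2, ?_, ?_⟩, ?_⟩
    · simp only [map_add, map_smul, smul_eq_mul, hz₀, mul_one]
      nlinarith [sq_nonneg (p.1 - 1), sq_nonneg (p.2.1 + 1)]
    · simp only [map_add, map_smul, smul_eq_mul, hz₀, mul_one]
      nlinarith [sq_nonneg (p.1 + 1), sq_nonneg (p.2.1 + 1)]
    · rintro u ⟨t, s, ht, hs, hts, rfl⟩
      set q : E m := (p.1, p.2.1, p.2.2 + (p.1^2 + p.2.1^2 + 2) • z₀) with hq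
      have e1 : (t • p + s • q).1 = p.1 := by
        simp only [hq, Prod.fst_add, Prod.smul_fst, smul_eq_mul]
        linear_combination p.1 * hts
      have e2 : (t • p + s • q).2.1 = p.2.1 := by
        simp only [hq, Prod.snd_add, Prod.smul_snd, Prod.fst_add, Prod.smul_fst, smul_eq_mul]
        linear_combination p.2.1 * hts
      have e3 : c (t • p + s • q).2.2 = c p.2.2 + s * (p.1^2 + p.2.1^2 + 2) := by
        simp only [hq, Prod.snd_add, Prod.smul_snd, map_add, map_smul, smul_eq_mul, hz₀, mul_one]
        linear_combination (c p.2.2) * hts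
      have hsT : (0:ℝ) ≤ s * (p.1^2 + p.2.1^2 + 2) := mul_nonneg hs hT.le
      refine ⟨?_, ?_, ?_, ?_⟩
      · rw [e1, e2]; exact h1
      · rw [e1, e2]; exact h2
      · rw [e1, e2, e3]
        nlinarith [mul_nonneg hsT h4.le, sq_nonneg (s * (p.1^2 + p.2.1^2 + 2))]
      · rw [e3]; linarith

lemma preconn_U7 (z₀ : Fin m → ℝ) (hz₀ : c z₀ = 1) : IsPreconnected (U c (7 : Fin 8)) := by
  refine star_preconn
    (V := {p : E m | p.2.1 < p.1 ∧ p.2.1 < -p.1 ∧ p.1 - p.2.1 < -c p.2.2 ∧ -p.1 - p.2.1 < -c p.2.2})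
    ?_ ((0:ℝ), (-1:ℝ), (-2:ℝ) • z₀) ⟨by norm_num, by norm_num,
      by norm_num [map_smul, smul_eq_mul, hz₀], by norm_num [map_smul, smul_eq_mul, hz₀]⟩ ?_ ?_
  · intro x hx y hy t s ht hs hts
    obtain ⟨h1, h2, h3, h4⟩ := hx; obtain ⟨k1, k2, k3, k4⟩ := hy
    refine ⟨?_, ?_, ?_, ?_⟩ <;>
      simp only [mem_setOf_eq, Prod.fst_add, Prod.snd_add, Prod.smul_fst, Prod.smul_snd,
        smul_eq_mul, map_add, map_smul]
    · exact combo_lt h1 k1 ht hs hts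
    · have := combo_lt h2 k2 ht hs hts; linarith
    · have := combo_lt h3 k3 ht hs hts; linarith
    · have := combo_lt h4 k4 ht hs hts; linarith
  · rintro p ⟨h1, h2, h3, h4⟩
    have hb : p.2.1 < 0 := by linarith
    have hw : -p.2.1 < -c p.2.2 := by linarith
    refine ⟨h1, h2, ?_, by linarith⟩
    nlinarith [mul_lt_mul'' hw hw (by linarith : (0:ℝ) ≤ -p.2.1) (by linarith : (0:ℝ) ≤ -p.2.1),
      sq_nonneg p.1]
  · rintro p ⟨h1, h2, h3, h4⟩
    have hT : (0:ℝ) < p.1^2 + p.2.1^2 + 2 := by positivity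
    refine ⟨(p.1, p.2.1, p.2.2 - (p.1^2 + p.2.1^2 + 2) • z₀), ⟨h1, h2, ?_, ?_⟩, ?_⟩
    · simp only [map_sub, map_smul, smul_eq_mul, hz₀, mul_one]
      nlinarith [sq_nonneg (p.1 - 1), sq_nonneg (p.2.1 + 1)]
    · simp only [map_sub, map_smul, smul_eq_mul, hz₀, mul_one]
      nlinarith [sq_nonneg (p.1 + 1), sq_nonneg (p.2.1 + 1)]
    · rintro u ⟨t, s, ht, hs, hts, rfl⟩
      set q : E m := (p.1, p.2.1, p.2.2 - (p.1^2 + p.2.1^2 + 2) • z₀) with hq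
      have e1 : (t • p + s • q).1 = p.1 := by
        simp only [hq, Prod.fst_add, Prod.smul_fst, smul_eq_mul]
        linear_combination p.1 * hts
      have e2 : (t • p + s • q).2.1 = p.2.1 := by
        simp only [hq, Prod.snd_add, Prod.smul_snd, Prod.fst_add, Prod.smul_fst, smul_eq_mul]
        linear_combination p.2.1 * hts
      have e3 : c (t • p + s • q).2.2 = c p.2.2 - s * (p.1^2 + p.2.1^2 + 2) := by
        simp only [hq, Prod.snd_add, Prod.smul_snd, map_add, map_sub, map_smul, smul_eq_mul, hz₀,
          mul_one]
        linear_combination (c p.2.2) * hts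
      have hsT : (0:ℝ) ≤ s * (p.1^2 + p.2.1^2 + 2) := mul_nonneg hs hT.le
      refine ⟨?_, ?_, ?_, ?_⟩
      · rw [e1, e2]; exact h1
      · rw [e1, e2]; exact h2
      · rw [e1, e2, e3]
        nlinarith [mul_nonneg hsT (show (0:ℝ) ≤ -c p.2.2 by linarith),
          sq_nonneg (s * (p.1^2 + p.2.1^2 + 2))]
      · rw [e3]; linarith

lemma preconn_U (z₀ : Fin m → ℝ) (hz₀ : c z₀ = 1) (i : Fin 8) : IsPreconnected (U c i) := by
  fin_cases i
  exacts [preconn_U0 c, preconn_U1 c, preconn_U2 c, preconn_U3 c z₀ hz₀, preconn_U4 c z₀ hz₀,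
    preconn_U5 c, preconn_U6 c z₀ hz₀, preconn_U7 c z₀ hz₀]

end PS8

/-- Section 5.4 (the principal stratum `T^pr_{x₀}X^μ`, generic case): for a nonzero linear
functional `c` on `ℝ^m`, the set of triples `(a, b, z)` with `b² − a² − c(z)² ≠ 0` and
`a ≠ ±b` has exactly eight connected components. -/
theorem principal_stratum_eight_components (m : ℕ) (c : (Fin m → ℝ) →ₗ[ℝ] ℝ) (hc : c ≠ 0) :
    Nat.card (ConnectedComponents
      {p : ℝ × ℝ × (Fin m → ℝ) //
        p.2.1 ^ 2 - p.1 ^ 2 - (c p.2.2) ^ 2 ≠ 0 ∧ p.1 ≠ p.2.1 ∧ p.1 ≠ -p.2.1}) = 8 := by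
  classical
  obtain ⟨z₁, hz₁⟩ : ∃ z, c z ≠ 0 := by
    by_contra h
    push_neg at h
    exact hc (LinearMap.ext fun z => by simp [h z])
  have hz₀ : c ((c z₁)⁻¹ • z₁) = 1 := by
    rw [map_smul, smul_eq_mul, inv_mul_cancel₀ hz₁]
  set z₀ : Fin m → ℝ := (c z₁)⁻¹ • z₁
  set X := {p : ℝ × ℝ × (Fin m → ℝ) //
      p.2.1 ^ 2 - p.1 ^ 2 - (c p.2.2) ^ 2 ≠ 0 ∧ p.1 ≠ p.2.1 ∧ p.1 ≠ -p.2.1} with hX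
  let f : X → Fin 8 := fun x =>
    if x.1 ∈ PS8.U c 0 then 0 else if x.1 ∈ PS8.U c 1 then 1 else if x.1 ∈ PS8.U c 2 then 2
    else if x.1 ∈ PS8.U c 3 then 3 else if x.1 ∈ PS8.U c 4 then 4 else if x.1 ∈ PS8.U c 5 then 5
    else if x.1 ∈ PS8.U c 6 then 6 else 7
  have hfmem : ∀ x : X, x.1 ∈ PS8.U c (f x) := by
    intro x
    obtain ⟨i, hi⟩ := PS8.mem_total c x.2
    show x.1 ∈ PS8.U c (if _ then _ else _)
    split_ifs with h0 h1 h2 h3 h4 h5 h6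
    · exact h0
    · exact h1
    · exact h2
    · exact h3
    · exact h4
    · exact h5
    · exact h6
    · fin_cases i
      exacts [(h0 hi).elim, (h1 hi).elim, (h2 hi).elim, (h3 hi).elim, (h4 hi).elim,
        (h5 hi).elim, (h6 hi).elim, hi]
  have hfeq : ∀ (x : X) (i : Fin 8), x.1 ∈ PS8.U c i → f x = i :=
    fun x i hi => PS8.mem_unique c (hfmem x) hi
  have hfiber : ∀ i : Fin 8, f ⁻¹' {i} = Subtype.val ⁻¹' (PS8.U c i) := by
    intro i
    ext x
    simp only [Set.mem_preimage, Set.mem_singleton_iff]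
    exact ⟨fun h => h ▸ hfmem x, fun h => hfeq x i h⟩
  have hcont : Continuous f := by
    refine IsLocallyConstant.continuous ?_
    rw [IsLocallyConstant.iff_isOpen_fiber]
    intro i
    show IsOpen (f ⁻¹' {i})
    rw [hfiber]
    exact (PS8.isOpen_U c i).preimage continuous_subtype_val
  have hpre : ∀ i : Fin 8, IsPreconnected (Subtype.val ⁻¹' (PS8.U c i) : Set X) := by
    intro i
    rw [← Topology.IsEmbedding.subtypeVal.toIsInducing.isPreconnected_image]
    rw [Set.image_preimage_eq_inter_range, Subtype.range_coe_subtype,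
      Set.inter_eq_self_of_subset_left (PS8.subset_S c i)]
    exact PS8.preconn_U c z₀ hz₀ i
  have hinj : Function.Injective hcont.connectedComponentsLift := by
    intro x y hxy
    obtain ⟨p, rfl⟩ := ConnectedComponents.surjective_coe x
    obtain ⟨q, rfl⟩ := ConnectedComponents.surjective_coe y
    rw [hcont.connectedComponentsLift_apply_coe, hcont.connectedComponentsLift_apply_coe] at hxy
    rw [ConnectedComponents.coe_eq_coe]
    have h1 : (Subtype.val ⁻¹' (PS8.U c (f q)) : Set X) ⊆ connectedComponent q :=
      (hpre (f q)).subset_connectedComponent (hfmem q)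
    have h2 : p ∈ (Subtype.val ⁻¹' (PS8.U c (f q)) : Set X) := by
      show p.1 ∈ PS8.U c (f q)
      rw [← hxy]
      exact hfmem p
    have h3 := connectedComponent_eq (h1 h2)
    first
    | exact h3
    | exact h3.symm
  have hsurj : Function.Surjective hcont.connectedComponentsLift := by
    intro i
    obtain ⟨p, hp⟩ := PS8.nonempty_U c z₀ hz₀ i
    refine ⟨(⟨p, PS8.subset_S c i hp⟩ : X), ?_⟩
    rw [hcont.connectedComponentsLift_apply_coe]
    exact hfeq _ i hp
  have := Nat.card_congr (Equiv.ofBijective _ ⟨hinj, hsurj⟩)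
  rw [this]
  simp [Nat.card_eq_fintype_card]
end

section
/- Let m ∈ ℕ and let c : ℝ^m → ℝ be a linear map. Consider the subset S = {(a, z) ∈ ℝ × ℝ^m : a ≠ 0, a ≠ c(z), a ≠ −c(z)} with the subspace topology. If c ≠ 0 then S has exactly six connected components, and if c = 0 then S has exactly two connected components. -/
open Set

private lemma bool_sel_ne {b : Bool} {x : ℝ} (h : cond b (0 < x) (x < 0)) : x ≠ 0 := by
  cases b
  · exact ne_of_lt h
  · exact ne_of_gt h

private lemma decide_sign {x : ℝ} (hx : x ≠ 0) (b : Bool) :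
    (decide (0 < x) = b) ↔ cond b (0 < x) (x < 0) := by
  cases b
  · show (decide (0 < x) = false) ↔ x < 0
    rw [decide_eq_false_iff_not, not_lt]
    exact ⟨fun h => lt_of_le_of_ne h hx, le_of_lt⟩
  · show (decide (0 < x) = true) ↔ 0 < x
    simp

private lemma half_open_convex (m : ℕ) (L : (ℝ × (Fin m → ℝ)) →ₗ[ℝ] ℝ) (b : Bool) :
    IsOpen {x | cond b (0 < L x) (L x < 0)} ∧ Convex ℝ {x | cond b (0 < L x) (L x < 0)} := by
  cases b
  · exact ⟨isOpen_lt L.continuous_of_finiteDimensional continuous_const,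
      convex_halfSpace_lt L.isLinear 0⟩
  · exact ⟨isOpen_lt continuous_const L.continuous_of_finiteDimensional,
      convex_halfSpace_gt L.isLinear 0⟩

private theorem card_components_eq {X B : Type*} [TopologicalSpace X] [TopologicalSpace B]
    [TotallyDisconnectedSpace B] {f : X → B} (hf : IsLocallyConstant f)
    (hfib : ∀ b : B, IsPreconnected (f ⁻¹' {b})) :
    Nat.card (ConnectedComponents X) = Nat.card (Set.range f) := by
  have hc : Continuous f := hf.continuous
  have hinj : Function.Injective hc.connectedComponentsLift := by
    intro u v huv
    obtain ⟨x, rfl⟩ := ConnectedComponents.surjective_coe u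
    obtain ⟨y, rfl⟩ := ConnectedComponents.surjective_coe v
    rw [hc.connectedComponentsLift_apply_coe, hc.connectedComponentsLift_apply_coe] at huv
    have hx : x ∈ f ⁻¹' {f x} := rfl
    have hy : y ∈ f ⁻¹' {f x} := by simp [huv]
    have hmem := (hfib (f x)).subset_connectedComponent hx hy
    exact ConnectedComponents.coe_eq_coe.mpr (connectedComponent_eq hmem)
  have hr : Set.range hc.connectedComponentsLift = Set.range f := by
    conv_rhs => rw [← hc.connectedComponentsLift_comp_coe]
    rw [Set.range_comp, ConnectedComponents.surjective_coe.range_eq, Set.image_univ]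
  rw [← Nat.card_range_of_injective hinj, hr]

private theorem stratum_card (m : ℕ) (c : (Fin m → ℝ) →ₗ[ℝ] ℝ) :
    Nat.card (ConnectedComponents
      {p : ℝ × (Fin m → ℝ) // p.1 ≠ 0 ∧ p.1 ≠ c p.2 ∧ p.1 ≠ -(c p.2)}) =
    Nat.card (Set.range
      (fun p : {p : ℝ × (Fin m → ℝ) // p.1 ≠ 0 ∧ p.1 ≠ c p.2 ∧ p.1 ≠ -(c p.2)} =>
        (decide (0 < p.1.1), decide (0 < p.1.1 - c p.1.2), decide (0 < p.1.1 + c p.1.2)))) := by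
  let L1 : (ℝ × (Fin m → ℝ)) →ₗ[ℝ] ℝ := LinearMap.fst ℝ ℝ (Fin m → ℝ)
  let Lc : (ℝ × (Fin m → ℝ)) →ₗ[ℝ] ℝ := c.comp (LinearMap.snd ℝ ℝ (Fin m → ℝ))
  let C : Bool × Bool × Bool → Set (ℝ × (Fin m → ℝ)) := fun b =>
    ({x | cond b.1 (0 < L1 x) (L1 x < 0)} ∩ {x | cond b.2.1 (0 < (L1 - Lc) x) ((L1 - Lc) x < 0)}) ∩
      {x | cond b.2.2 (0 < (L1 + Lc) x) ((L1 + Lc) x < 0)}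
  have hCopen : ∀ b, IsOpen (C b) := fun b =>
    ((half_open_convex m L1 b.1).1.inter (half_open_convex m (L1 - Lc) b.2.1).1).inter
      (half_open_convex m (L1 + Lc) b.2.2).1
  have hCconv : ∀ b, Convex ℝ (C b) := fun b =>
    ((half_open_convex m L1 b.1).2.inter (half_open_convex m (L1 - Lc) b.2.1).2).inter
      (half_open_convex m (L1 + Lc) b.2.2).2
  have hCsub : ∀ b, C b ⊆ {p : ℝ × (Fin m → ℝ) | p.1 ≠ 0 ∧ p.1 ≠ c p.2 ∧ p.1 ≠ -(c p.2)} := by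
    rintro b x ⟨⟨h1, h2⟩, h3⟩
    have e2 : (L1 - Lc) x = x.1 - c x.2 := rfl
    have e3 : (L1 + Lc) x = x.1 + c x.2 := rfl
    refine ⟨bool_sel_ne h1, ?_, ?_⟩
    · exact sub_ne_zero.mp (e2 ▸ bool_sel_ne h2)
    · intro he
      exact (e3 ▸ bool_sel_ne h3) (by rw [he]; ring)
  have hfib_eq : ∀ b : Bool × Bool × Bool,
      (fun p : {p : ℝ × (Fin m → ℝ) // p.1 ≠ 0 ∧ p.1 ≠ c p.2 ∧ p.1 ≠ -(c p.2)} =>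
        (decide (0 < p.1.1), decide (0 < p.1.1 - c p.1.2), decide (0 < p.1.1 + c p.1.2)))
        ⁻¹' {b} = Subtype.val ⁻¹' (C b) := by
    rintro ⟨b1, b2, b3⟩
    ext ⟨⟨a, z⟩, ha, hu, hv⟩
    have hu' : a - c z ≠ 0 := sub_ne_zero.mpr hu
    have hv' : a + c z ≠ 0 := fun h => hv (by linarith)
    simp only [Set.mem_preimage, Set.mem_singleton_iff, Prod.mk.injEq, Set.mem_inter_iff,
      Set.mem_setOf_eq, C, L1, Lc, LinearMap.sub_apply, LinearMap.add_apply, LinearMap.coe_comp,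
      Function.comp_apply, LinearMap.fst_apply, LinearMap.snd_apply,
      decide_sign ha, decide_sign hu', decide_sign hv']
    tauto
  refine card_components_eq ?_ ?_
  · exact IsLocallyConstant.iff_isOpen_fiber.2 fun b => by
      rw [hfib_eq b]; exact (hCopen b).preimage continuous_subtype_val
  · intro b
    rw [hfib_eq b]
    have himg : (Subtype.val : {p : ℝ × (Fin m → ℝ) // p.1 ≠ 0 ∧ p.1 ≠ c p.2 ∧ p.1 ≠ -(c p.2)} → _)
        '' (Subtype.val ⁻¹' C b) = C b := by
      apply Set.image_preimage_eq_of_subset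
      rw [Subtype.range_coe_subtype]
      exact hCsub b
    refine Topology.IsInducing.subtypeVal.isPreconnected_image.mp ?_
    have hpre := (hCconv b).isPreconnected
    rw [← himg] at hpre
    exact hpre

/-- Section 5.4 (the real principal stratum `(𝔞^pr)^σ`): for a linear functional `c` on
`ℝ^m`, the set of pairs `(a, z)` with `a ≠ 0` and `a ≠ ±c(z)` has exactly six connected
components if `c ≠ 0`, and exactly two connected components if `c = 0`. -/
theorem real_principal_stratum_components (m : ℕ) (c : (Fin m → ℝ) →ₗ[ℝ] ℝ) :
    (c ≠ 0 → Nat.card (ConnectedComponents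
      {p : ℝ × (Fin m → ℝ) // p.1 ≠ 0 ∧ p.1 ≠ c p.2 ∧ p.1 ≠ -(c p.2)}) = 6) ∧
    (c = 0 → Nat.card (ConnectedComponents
      {p : ℝ × (Fin m → ℝ) // p.1 ≠ 0 ∧ p.1 ≠ c p.2 ∧ p.1 ≠ -(c p.2)}) = 2) := by
  constructor
  · intro hc
    rw [stratum_card m c]
    obtain ⟨z, hz⟩ : ∃ z, c z ≠ 0 := by
      by_contra h
      push_neg at h
      exact hc (LinearMap.ext fun w => by simp [h w])
    have hz0 : c ((c z)⁻¹ • z) = 1 := by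
      rw [map_smul, smul_eq_mul, inv_mul_cancel₀ hz]
    set z₀ := (c z)⁻¹ • z with hz₀def
    have key : ∀ a t : ℝ, a ≠ 0 → a ≠ t → a ≠ -t →
        (decide (0 < a), decide (0 < a - t), decide (0 < a + t)) ∈
          Set.range (fun p : {p : ℝ × (Fin m → ℝ) // p.1 ≠ 0 ∧ p.1 ≠ c p.2 ∧ p.1 ≠ -(c p.2)} =>
            (decide (0 < p.1.1), decide (0 < p.1.1 - c p.1.2), decide (0 < p.1.1 + c p.1.2))) := by
      intro a t ha h1 h2
      have hct : c (t • z₀) = t := by rw [map_smul, hz0, smul_eq_mul, mul_one]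
      exact ⟨⟨(a, t • z₀), ha,
        by show a ≠ c (t • z₀); rw [hct]; exact h1,
        by show a ≠ -(c (t • z₀)); rw [hct]; exact h2⟩, by simp [hct]⟩
    have hrange : Set.range
        (fun p : {p : ℝ × (Fin m → ℝ) // p.1 ≠ 0 ∧ p.1 ≠ c p.2 ∧ p.1 ≠ -(c p.2)} =>
          (decide (0 < p.1.1), decide (0 < p.1.1 - c p.1.2), decide (0 < p.1.1 + c p.1.2))) =
        (↑({(true, true, true), (true, true, false), (true, false, true),
            (false, false, false), (false, false, true), (false, true, false)} :
          Finset (Bool × Bool × Bool)) : Set (Bool × Bool × Bool)) := by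
      apply Set.eq_of_subset_of_subset
      · rintro x ⟨⟨⟨a, w⟩, ha, hu, hv⟩, rfl⟩
        have hu' : a - c w ≠ 0 := sub_ne_zero.mpr hu
        have hv' : a + c w ≠ 0 := fun h => hv (by linarith)
        rcases ha.lt_or_gt with h1 | h1 <;> rcases hu'.lt_or_gt with h2 | h2 <;>
            rcases hv'.lt_or_gt with h3 | h3 <;>
          first
            | (exfalso; linarith)
            | simp [h1, h2, h3, asymm h1, asymm h2, asymm h3]
      · intro b hb
        simp only [Finset.coe_insert, Set.mem_insert_iff, Finset.coe_singleton,
          Set.mem_singleton_iff] at hb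
        rcases hb with rfl | rfl | rfl | rfl | rfl | rfl
        · have e : ((true, true, true) : Bool × Bool × Bool)
              = (decide ((0:ℝ) < 1), decide ((0:ℝ) < 1 - 0), decide ((0:ℝ) < 1 + 0)) := by
            norm_num
          rw [e]; exact key 1 0 (by norm_num) (by norm_num) (by norm_num)
        · have e : ((true, true, false) : Bool × Bool × Bool)
              = (decide ((0:ℝ) < 1), decide ((0:ℝ) < 1 - (-2)), decide ((0:ℝ) < 1 + (-2))) := by
            norm_num
          rw [e]; exact key 1 (-2) (by norm_num) (by norm_num) (by norm_num)
        · have e : ((true, false, true) : Bool × Bool × Bool)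
              = (decide ((0:ℝ) < 1), decide ((0:ℝ) < 1 - 2), decide ((0:ℝ) < 1 + 2)) := by
            norm_num
          rw [e]; exact key 1 2 (by norm_num) (by norm_num) (by norm_num)
        · have e : ((false, false, false) : Bool × Bool × Bool)
              = (decide ((0:ℝ) < -1), decide ((0:ℝ) < -1 - 0), decide ((0:ℝ) < -1 + 0)) := by
            norm_num
          rw [e]; exact key (-1) 0 (by norm_num) (by norm_num) (by norm_num)
        · have e : ((false, false, true) : Bool × Bool × Bool)
              = (decide ((0:ℝ) < -1), decide ((0:ℝ) < -1 - 2), decide ((0:ℝ) < -1 + 2)) := by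
            norm_num
          rw [e]; exact key (-1) 2 (by norm_num) (by norm_num) (by norm_num)
        · have e : ((false, true, false) : Bool × Bool × Bool)
              = (decide ((0:ℝ) < -1), decide ((0:ℝ) < -1 - (-2)), decide ((0:ℝ) < -1 + (-2))) := by
            norm_num
          rw [e]; exact key (-1) (-2) (by norm_num) (by norm_num) (by norm_num)
    rw [hrange, Nat.card_coe_set_eq, Set.ncard_coe_finset]
    decide
  · intro hc
    rw [stratum_card m c]
    have hc0 : ∀ w, c w = 0 := fun w => by rw [hc]; rfl
    have hrange : Set.range
        (fun p : {p : ℝ × (Fin m → ℝ) // p.1 ≠ 0 ∧ p.1 ≠ c p.2 ∧ p.1 ≠ -(c p.2)} =>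
          (decide (0 < p.1.1), decide (0 < p.1.1 - c p.1.2), decide (0 < p.1.1 + c p.1.2))) =
        {((true, true, true) : Bool × Bool × Bool), (false, false, false)} := by
      apply Set.eq_of_subset_of_subset
      · rintro x ⟨⟨⟨a, w⟩, ha, -, -⟩, rfl⟩
        simp only [hc0, sub_zero, add_zero]
        rcases ha.lt_or_gt with h | h
        · right; simp [asymm h]
        · left; simp [h]
      · rintro b hb
        rcases hb with rfl | rfl
        · exact ⟨⟨(1, 0), by norm_num [hc0]⟩, by norm_num [hc0]⟩
        · exact ⟨⟨(-1, 0), by norm_num [hc0]⟩, by norm_num [hc0]⟩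
    rw [hrange, Nat.card_coe_set_eq, Set.ncard_pair (by decide)]
end

section
/- Every symmetric n×n real matrix A is congruent, via an invertible upper triangular real matrix C (i.e. CᵀAC = P), to a unique symmetric real matrix P such that every row of P contains at most one nonzero entry, every nonzero diagonal entry of P is 1 or −1, and every nonzero off-diagonal entry of P is 1. -/
open Matrix

namespace SP

variable {n : ℕ}

abbrev Mat (n : ℕ) := Matrix (Fin n) (Fin n) ℝ

def IsSP (P : Mat n) : Prop :=
  P.IsSymm ∧ (∀ i j k, P i j ≠ 0 → P i k ≠ 0 → j = k) ∧
    (∀ i, P i i ≠ 0 → P i i = 1 ∨ P i i = -1) ∧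
    (∀ i j, i ≠ j → P i j ≠ 0 → P i j = 1)

def single (r s : Fin n) (c : ℝ) : Mat n :=
  Matrix.of fun k l => if k = r ∧ l = s then c else 0

lemma single_apply (r s : Fin n) (c : ℝ) (k l : Fin n) :
    single r s c k l = if k = r ∧ l = s then c else 0 := rfl

def elemC (r : Fin n) (v : Fin n → ℝ) : Mat n :=
  Matrix.of fun p l => (if p = l then (1:ℝ) else 0) + (if p = r then v l else 0)

def Fixes (C : Mat n) (i : Fin n) : Prop :=
  (∀ k, C i k = if i = k then 1 else 0) ∧ (∀ k, C k i = if k = i then 1 else 0)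

lemma elemC_congr (A : Mat n) (r : Fin n) (v : Fin n → ℝ) (k l : Fin n) :
    ((elemC r v)ᵀ * A * elemC r v) k l
      = A k l + v k * A r l + A k r * v l + v k * A r r * v l := by
  simp only [elemC, Matrix.mul_apply, Matrix.transpose_apply, Matrix.of_apply,
    add_mul, mul_add, Finset.sum_add_distrib, ite_mul, mul_ite, one_mul, zero_mul,
    mul_one, mul_zero, Finset.sum_ite_eq, Finset.sum_ite_eq', Finset.mem_univ, if_true]
  ring

lemma elemC_tri (r : Fin n) (v : Fin n → ℝ) (hv : ∀ l, l ≤ r → v l = 0) :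
    (elemC r v).BlockTriangular id := by
  intro i j hij
  simp only [id] at hij
  simp only [elemC, Matrix.of_apply]
  rw [if_neg (by rintro rfl; exact lt_irrefl _ hij)]
  by_cases h : i = r
  · subst h; rw [hv j (le_of_lt hij), if_pos rfl]; ring
  · rw [if_neg h]; ring

lemma elemC_diag (r : Fin n) (v : Fin n → ℝ) (hv : v r = 0) (i : Fin n) :
    elemC r v i i = 1 := by
  simp only [elemC, Matrix.of_apply, if_pos rfl]
  by_cases h : i = r
  · subst h; rw [if_pos rfl, hv]; simp
  · rw [if_neg h]; simp

lemma single_congr (C : Mat n) (r s : Fin n) (c : ℝ) (k l : Fin n) :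
    (Cᵀ * single r s c * C) k l = C r k * c * C s l := by
  simp only [single, Matrix.mul_apply, Matrix.transpose_apply, Matrix.of_apply,
    ite_mul, mul_ite, zero_mul, mul_zero]
  rw [Finset.sum_eq_single s]
  · rw [Finset.sum_eq_single r]
    · simp
    · intro b _ hb; simp [hb]
    · intro h; exact absurd (Finset.mem_univ r) h
  · intro b _ hb
    rw [Finset.sum_eq_zero, zero_mul]
    intro x _; simp [hb]
  · intro h; exact absurd (Finset.mem_univ s) h

lemma sandwich_row (P C : Mat n) (m : Fin n) (hC : C.BlockTriangular id)
    (hP : ∀ i : Fin n, i < m → ∀ k, P i k = 0) (l : Fin n) :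
    (Cᵀ * P * C) m l = C m m * ∑ p, P m p * C p l := by
  rw [Matrix.mul_assoc, Matrix.mul_apply]
  rw [Finset.sum_eq_single m]
  · rw [Matrix.transpose_apply, Matrix.mul_apply]
  · intro b _ hb
    rcases lt_or_gt_of_ne hb with h | h
    · rw [Matrix.mul_apply]
      have : ∀ p, P b p * C p l = 0 := fun p => by rw [hP b h p, zero_mul]
      rw [Matrix.transpose_apply, Finset.sum_eq_zero (fun p _ => this p), mul_zero]
    · rw [Matrix.transpose_apply, hC h, zero_mul]
  · intro h; exact absurd (Finset.mem_univ m) h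

lemma isSP_rows (P R : Mat n) (hP : IsSP P) (hsymm : R.IsSymm)
    (h : ∀ p, (∀ q, R p q = 0) ∨ (∀ q, R p q = P p q)) : IsSP R := by
  refine ⟨hsymm, ?_, ?_, ?_⟩
  · intro i a b ha hb
    rcases h i with h0 | he
    · exact absurd (h0 a) ha
    · rw [he a] at ha; rw [he b] at hb; exact hP.2.1 i a b ha hb
  · intro i hi
    rcases h i with h0 | he
    · exact absurd (h0 i) hi
    · rw [he i] at hi ⊢; exact hP.2.2.1 i hi
  · intro i a hia hi
    rcases h i with h0 | he
    · exact absurd (h0 a) hi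
    · rw [he a] at hi ⊢; exact hP.2.2.2 i a hia hi

lemma congr_single_fix (C : Mat n) (r s : Fin n) (c : ℝ)
    (hr : ∀ k, C r k = if r = k then 1 else 0) (hs : ∀ k, C s k = if s = k then 1 else 0) :
    Cᵀ * single r s c * C = single r s c := by
  ext k l
  rw [single_congr, hr k, hs l, single_apply]
  by_cases h1 : r = k <;> by_cases h2 : s = l <;> simp [h1, h2, eq_comm]

lemma congr_rowcol_zero (B C : Mat n) (r : Fin n)
    (hcol : ∀ k, C k r = if k = r then 1 else 0)
    (hrow0 : ∀ q, B r q = 0) (hcol0 : ∀ q, B q r = 0) :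
    (∀ l, (Cᵀ * B * C) r l = 0) ∧ (∀ l, (Cᵀ * B * C) l r = 0) := by
  constructor
  · intro l
    rw [Matrix.mul_assoc, Matrix.mul_apply]
    apply Finset.sum_eq_zero; intro p _
    rw [Matrix.transpose_apply, hcol p]
    by_cases hp : p = r
    · rw [hp, if_pos rfl, one_mul, Matrix.mul_apply]
      exact Finset.sum_eq_zero fun q _ => by rw [hrow0 q, zero_mul]
    · rw [if_neg hp, zero_mul]
  · intro l
    rw [Matrix.mul_apply]
    apply Finset.sum_eq_zero; intro q _
    rw [hcol q]
    by_cases hq : q = r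
    · rw [hq, if_pos rfl, mul_one, Matrix.mul_apply]
      exact Finset.sum_eq_zero fun p _ => by rw [Matrix.transpose_apply, hcol0 p, mul_zero]
    · rw [if_neg hq, mul_zero]

lemma isSP_add_diag (P : Mat n) (hP : IsSP P) (r : Fin n) (e : ℝ) (he : e = 1 ∨ e = -1)
    (h0 : ∀ q, P r q = 0) (h0' : ∀ q, P q r = 0) : IsSP (P + single r r e) := by
  have hval : ∀ p q, (P + single r r e) p q = if p = r ∧ q = r then e else P p q := by
    intro p q
    rw [Matrix.add_apply, single_apply]
    by_cases h : p = r ∧ q = r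
    · rw [if_pos h, if_pos h, h.1, h0 q, zero_add]
    · rw [if_neg h, if_neg h, add_zero]
  have hrow : ∀ q, (P + single r r e) r q = if q = r then e else 0 := by
    intro q; rw [hval]
    by_cases hq : q = r
    · simp [hq]
    · simp [hq, h0 q]
  have hcol : ∀ q, (P + single r r e) q r = if q = r then e else 0 := by
    intro q; rw [hval]
    by_cases hq : q = r
    · simp [hq]
    · simp [hq, h0' q]
  have hother : ∀ p, p ≠ r → ∀ q, (P + single r r e) p q = P p q := by
    intro p hp q; rw [hval, if_neg (fun h => hp h.1)]
  have he0 : e ≠ 0 := by rcases he with h | h <;> rw [h] <;> norm_num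
  refine ⟨hP.1.add ?_, ?_, ?_, ?_⟩
  · apply Matrix.IsSymm.ext
    intro a b
    rw [single_apply, single_apply]
    exact if_congr and_comm rfl rfl
  · intro i a b ha hb
    by_cases hi : i = r
    · rw [hi] at ha hb
      rw [hrow a] at ha; rw [hrow b] at hb
      by_cases h1 : a = r
      · by_cases h2 : b = r
        · rw [h1, h2]
        · rw [if_neg h2] at hb; exact absurd rfl hb
      · rw [if_neg h1] at ha; exact absurd rfl ha
    · rw [hother i hi a] at ha; rw [hother i hi b] at hb
      exact hP.2.1 i a b ha hb
  · intro i hi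
    by_cases hir : i = r
    · rw [hir] at hi ⊢
      rw [hrow r, if_pos rfl] at hi ⊢
      exact he
    · rw [hother i hir i] at hi ⊢
      exact hP.2.2.1 i hi
  · intro i a hia hi
    by_cases hir : i = r
    · rw [hir] at hi ⊢
      rw [hrow a] at hi ⊢
      by_cases h1 : a = r
      · exact absurd (hir.trans h1.symm) hia
      · rw [if_neg h1] at hi; exact absurd rfl hi
    · rw [hother i hir a] at hi ⊢
      exact hP.2.2.2 i a hia hi

lemma isSP_add_off (P : Mat n) (hP : IsSP P) (r s : Fin n) (hrs : r ≠ s)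
    (h0r : ∀ q, P r q = 0) (h0r' : ∀ q, P q r = 0)
    (h0s : ∀ q, P s q = 0) (h0s' : ∀ q, P q s = 0) :
    IsSP (P + (single r s 1 + single s r 1)) := by
  have hval : ∀ p q, (P + (single r s 1 + single s r 1)) p q
      = if p = r ∧ q = s then 1 else if p = s ∧ q = r then 1 else P p q := by
    intro p q
    rw [Matrix.add_apply, Matrix.add_apply, single_apply, single_apply]
    by_cases h1 : p = r ∧ q = s
    · rw [if_pos h1, if_pos h1, h1.1, h0r q, if_neg, zero_add, add_zero]
      intro h2; exact hrs h2.1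
    · rw [if_neg h1, if_neg h1, zero_add]
      by_cases h2 : p = s ∧ q = r
      · rw [if_pos h2, if_pos h2, h2.1, h0s q, zero_add]
      · rw [if_neg h2, if_neg h2, add_zero]
  have hrow : ∀ q, (P + (single r s 1 + single s r 1)) r q = if q = s then 1 else 0 := by
    intro q; rw [hval]
    by_cases hq : q = s
    · simp [hq]
    · rw [if_neg (fun h : r = r ∧ q = s => hq h.2), if_neg (fun h : r = s ∧ q = r => hrs h.1),
        h0r q, if_neg hq]
  have hrow' : ∀ q, (P + (single r s 1 + single s r 1)) s q = if q = r then 1 else 0 := by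
    intro q; rw [hval]
    have hc1 : ¬ (s = r ∧ q = s) := fun h => hrs h.1.symm
    by_cases hq : q = r
    · rw [if_neg hc1, if_pos ⟨rfl, hq⟩, if_pos hq]
    · rw [if_neg hc1, if_neg (fun h : s = s ∧ q = r => hq h.2), h0s q, if_neg hq]
  have hother : ∀ p, p ≠ r → p ≠ s → ∀ q, (P + (single r s 1 + single s r 1)) p q = P p q := by
    intro p hpr hps q
    rw [hval, if_neg (fun h => hpr h.1), if_neg (fun h => hps h.1)]
  refine ⟨hP.1.add ?_, ?_, ?_, ?_⟩
  · apply Matrix.IsSymm.ext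
    intro a b
    rw [Matrix.add_apply, Matrix.add_apply, single_apply, single_apply, single_apply,
      single_apply, add_comm]
    exact congrArg₂ (· + ·) (if_congr and_comm rfl rfl) (if_congr and_comm rfl rfl)
  · intro i a b ha hb
    by_cases hir : i = r
    · rw [hir] at ha hb
      rw [hrow a] at ha; rw [hrow b] at hb
      by_cases h1 : a = s
      · by_cases h2 : b = s
        · rw [h1, h2]
        · rw [if_neg h2] at hb; exact absurd rfl hb
      · rw [if_neg h1] at ha; exact absurd rfl ha
    · by_cases his : i = s
      · rw [his] at ha hb
        rw [hrow' a] at ha; rw [hrow' b] at hb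
        by_cases h1 : a = r
        · by_cases h2 : b = r
          · rw [h1, h2]
          · rw [if_neg h2] at hb; exact absurd rfl hb
        · rw [if_neg h1] at ha; exact absurd rfl ha
      · rw [hother i hir his a] at ha; rw [hother i hir his b] at hb
        exact hP.2.1 i a b ha hb
  · intro i hi
    by_cases hir : i = r
    · rw [hir] at hi
      rw [hrow r, if_neg hrs] at hi
      exact absurd rfl hi
    · by_cases his : i = s
      · rw [his] at hi
        rw [hrow' s, if_neg (fun h => hrs h.symm)] at hi
        exact absurd rfl hi
      · rw [hother i hir his i] at hi ⊢
        exact hP.2.2.1 i hi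
  · intro i a hia hi
    by_cases hir : i = r
    · rw [hir] at hi ⊢
      rw [hrow a] at hi ⊢
      by_cases h1 : a = s
      · rw [if_pos h1]
      · rw [if_neg h1] at hi; exact absurd rfl hi
    · by_cases his : i = s
      · rw [his] at hi ⊢
        rw [hrow' a] at hi ⊢
        by_cases h1 : a = r
        · rw [if_pos h1]
        · rw [if_neg h1] at hi; exact absurd rfl hi
      · rw [hother i hir his a] at hi ⊢
        exact hP.2.2.2 i a hia hi

lemma Fixes_mul {C D : Mat n} {i : Fin n} (hC : Fixes C i) (hD : Fixes D i) :
    Fixes (C * D) i := by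
  constructor
  · intro k
    rw [Matrix.mul_apply, Finset.sum_eq_single i]
    · rw [hC.1 i, if_pos rfl, one_mul, hD.1 k]
    · intro b _ hb; rw [hC.1 b, if_neg (Ne.symm hb), zero_mul]
    · intro h; exact absurd (Finset.mem_univ i) h
  · intro k
    rw [Matrix.mul_apply, Finset.sum_eq_single i]
    · rw [hD.2 i, if_pos rfl, mul_one, hC.2 k]
    · intro b _ hb; rw [hD.2 b, if_neg hb, mul_zero]
    · intro h; exact absurd (Finset.mem_univ i) h

lemma diag_mul_tri {C D : Mat n} (hC : C.BlockTriangular id) (hD : D.BlockTriangular id)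
    (i : Fin n) : (C * D) i i = C i i * D i i := by
  rw [Matrix.mul_apply, Finset.sum_eq_single i]
  · intro b _ hb
    rcases lt_or_gt_of_ne hb with h | h
    · rw [hC (show (id b : Fin n) < id i from h), zero_mul]
    · rw [hD (show (id i : Fin n) < id b from h), mul_zero]
  · intro h; exact absurd (Finset.mem_univ i) h

lemma congr_mul (A C D : Mat n) : (C * D)ᵀ * A * (C * D) = Dᵀ * (Cᵀ * A * C) * D := by
  simp only [Matrix.transpose_mul, Matrix.mul_assoc]

lemma congr_isSymm {A : Mat n} (hA : A.IsSymm) (C : Mat n) : (Cᵀ * A * C).IsSymm := by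
  unfold Matrix.IsSymm
  rw [Matrix.transpose_mul, Matrix.transpose_mul, Matrix.transpose_transpose, hA,
    Matrix.mul_assoc]

lemma diag_congr (A : Mat n) (w : Fin n → ℝ) (k l : Fin n) :
    ((Matrix.diagonal w)ᵀ * A * Matrix.diagonal w) k l = w k * A k l * w l := by
  rw [Matrix.diagonal_transpose, Matrix.mul_diagonal, Matrix.diagonal_mul]

lemma uniq_aux (n : ℕ) : ∀ (d : ℕ) (P Q C : Mat n), IsSP P → IsSP Q →
    C.BlockTriangular id → (∀ i, C i i ≠ 0) → Cᵀ * P * C = Q →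
    (∀ i : Fin n, (i : ℕ) + d < n → ∀ k, P i k = 0) → P = Q := by
  intro d
  induction d with
  | zero =>
    intro P Q C _ _ _ _ hc h0
    have hP0 : P = 0 := by ext i k; exact h0 i (by omega) k
    subst hP0
    rw [← hc, Matrix.mul_zero, Matrix.zero_mul]
  | succ d ih =>
    intro P Q C hP hQ htri hdiag hc hz
    by_cases hnd : n ≤ d
    · exact ih P Q C hP hQ htri hdiag hc (fun i hi k => absurd hi (by omega))
    push_neg at hnd
    set m : Fin n := ⟨n - d - 1, by omega⟩ with hm
    have hrowlt : ∀ i : Fin n, i < m → ∀ k, P i k = 0 := by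
      intro i hi k
      refine hz i ?_ k
      have := Fin.lt_def.mp hi
      simp only [hm] at this
      omega
    -- reduce to rows ≤ m zero case
    have key : ∀ (i : Fin n), (i:ℕ) + d < n → (i < m ∨ i = m) := by
      intro i hi
      rcases lt_or_eq_of_le (show (i:ℕ) ≤ (m:ℕ) by simp only [hm]; omega) with h | h
      · exact Or.inl (Fin.lt_def.mpr h)
      · exact Or.inr (Fin.ext h)
    by_cases hrm : ∀ k, P m k = 0
    · apply ih P Q C hP hQ htri hdiag hc
      intro i hi k
      rcases key i hi with h | h
      · exact hrowlt i h k
      · subst h; exact hrm k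
    push_neg at hrm
    obtain ⟨j, hj⟩ := hrm
    have hQrow : ∀ l, Q m l = C m m * ∑ p, P m p * C p l := fun l => by
      rw [← hc]; exact sandwich_row P C m htri hrowlt l
    by_cases hjm : j = m
    · -- diagonal pivot
      subst hjm
      have hεpm : P m m = 1 ∨ P m m = -1 := hP.2.2.1 m hj
      have hProw : ∀ l, l ≠ m → P m l = 0 := fun l hl => by
        by_contra h; exact hl (hP.2.1 m l m h hj)
      have hsum : ∀ l, ∑ p, P m p * C p l = P m m * C m l := fun l => by
        rw [Finset.sum_eq_single m]
        · intro b _ hb; rw [hProw b hb, zero_mul]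
        · intro h; exact absurd (Finset.mem_univ m) h
      have hQrow' : ∀ l, Q m l = C m m * (P m m * C m l) := fun l => by
        rw [hQrow, hsum]
      have hQmm0 : Q m m ≠ 0 := by
        rw [hQrow' m]
        exact mul_ne_zero (hdiag m) (mul_ne_zero hj (hdiag m))
      have hQε : Q m m = P m m := by
        rcases hQ.2.2.1 m hQmm0 with h1 | h1 <;> rcases hεpm with h2 | h2
        · rw [h1, h2]
        · have := hQrow' m; rw [h1, h2] at this; nlinarith [sq_nonneg (C m m)]
        · have := hQrow' m; rw [h1, h2] at this; nlinarith [sq_nonneg (C m m)]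
        · rw [h1, h2]
      have hCrow : ∀ l, l ≠ m → C m l = 0 := by
        intro l hl
        have hQml0 : Q m l = 0 := by
          by_contra h; exact hl (hQ.2.1 m l m h hQmm0)
        have h2 : C m m * (P m m * C m l) = 0 := by rw [← hQrow' l, hQml0]
        rcases mul_eq_zero.mp h2 with h3 | h3
        · exact absurd h3 (hdiag m)
        rcases mul_eq_zero.mp h3 with h4 | h4
        · exact absurd h4 hj
        · exact h4
      set M : Mat n := single m m (P m m) with hMdef
      have hMe : ∀ p q, M p q = if p = m ∧ q = m then P m m else 0 := fun p q => rfl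
      have hCM : Cᵀ * M * C = M := by
        ext k l
        have hckl : (Cᵀ * M * C) k l = C m k * P m m * C m l := by
          rw [hMdef]; exact single_congr C m m (P m m) k l
        rw [hckl, hMe]
        by_cases hk : k = m <;> by_cases hl : l = m
        · subst hk; subst hl
          have h5 := hQrow' m
          rw [hQε] at h5
          rw [if_pos ⟨rfl, rfl⟩]
          linear_combination -h5
        · simp [hl, hCrow l hl]
        · simp [hk, hCrow k hk]
        · simp [hk, hCrow k hk]
      have hsub : Cᵀ * (P - M) * C = Q - M := by
        rw [Matrix.mul_sub, Matrix.sub_mul, hc, hCM]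
      have hMsymm : M.IsSymm := by
        apply Matrix.IsSymm.ext
        intro a b
        simp only [hMe]
        by_cases h1 : a = m <;> by_cases h2 : b = m <;> simp [h1, h2]
      have hPMrow0 : ∀ q, (P - M) m q = 0 := by
        intro q
        rw [Matrix.sub_apply, hMe]
        by_cases hq : q = m
        · subst hq; simp
        · simp [hq, hProw q hq]
      have hPME : ∀ p, (∀ q, (P - M) p q = 0) ∨ (∀ q, (P - M) p q = P p q) := by
        intro p
        by_cases hp : p = m
        · subst hp; exact Or.inl hPMrow0
        · right; intro q
          rw [Matrix.sub_apply, hMe]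
          simp [hp]
      have hQrow0 : ∀ l, l ≠ m → Q m l = 0 := fun l hl => by
        by_contra h; exact hl (hQ.2.1 m l m h hQmm0)
      have hQME : ∀ p, (∀ q, (Q - M) p q = 0) ∨ (∀ q, (Q - M) p q = Q p q) := by
        intro p
        by_cases hp : p = m
        · subst hp
          left; intro q
          rw [Matrix.sub_apply, hMe]
          by_cases hq : q = m
          · subst hq; simp [hQε]
          · simp [hq, hQrow0 q hq]
        · right; intro q
          rw [Matrix.sub_apply, hMe]
          simp [hp]
      have hPM : IsSP (P - M) := isSP_rows P _ hP (hP.1.sub hMsymm) hPME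
      have hQM : IsSP (Q - M) := isSP_rows Q _ hQ (hQ.1.sub hMsymm) hQME
      have hzPM : ∀ i : Fin n, (i : ℕ) + d < n → ∀ k, (P - M) i k = 0 := by
        intro i hi k
        rcases key i hi with h | h
        · rw [Matrix.sub_apply, hMe, hrowlt i h k]
          have : i ≠ m := ne_of_lt h
          simp [this]
        · subst h; exact hPMrow0 k
      have := ih (P - M) (Q - M) C hPM hQM htri hdiag hsub hzPM
      exact sub_left_inj.mp this
    · -- off-diagonal pivot
      have hsymmP : ∀ a b : Fin n, P a b = P b a := fun a b => hP.1.apply b a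
      have hsymmQ : ∀ a b : Fin n, Q a b = Q b a := fun a b => hQ.1.apply b a
      have hnotmj : ¬ (m = j) := fun h => hjm h.symm
      have hmj : ¬ j < m := by
        intro h
        exact hj (by rw [hsymmP m j]; exact hrowlt j h m)
      have hPmj : P m j = 1 := hP.2.2.2 m j hnotmj hj
      have hProw : ∀ l, l ≠ j → P m l = 0 := fun l hl => by
        by_contra h; exact hl (hP.2.1 m l j h hj)
      have hsum : ∀ l, ∑ p, P m p * C p l = C j l := fun l => by
        rw [Finset.sum_eq_single j]
        · rw [hPmj, one_mul]
        · intro b _ hb; rw [hProw b hb, zero_mul]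
        · intro h; exact absurd (Finset.mem_univ j) h
      have hQrow' : ∀ l, Q m l = C m m * C j l := fun l => by rw [hQrow, hsum]
      have hQmj0 : Q m j ≠ 0 := by rw [hQrow' j]; exact mul_ne_zero (hdiag m) (hdiag j)
      have hCjl : ∀ l, l ≠ j → C j l = 0 := by
        intro l hl
        have hQml0 : Q m l = 0 := by
          by_contra h; exact hl (hQ.2.1 m l j h hQmj0)
        have h2 : C m m * C j l = 0 := by rw [← hQrow' l, hQml0]
        rcases mul_eq_zero.mp h2 with h3 | h3
        · exact absurd h3 (hdiag m)
        · exact h3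
      have hQmj : Q m j = 1 := hQ.2.2.2 m j hnotmj hQmj0
      have hQmrow : ∀ l, l ≠ j → Q m l = 0 := fun l hl => by
        by_contra h; exact hl (hQ.2.1 m l j h hQmj0)
      have hQjm : Q j m = 1 := by rw [hsymmQ j m]; exact hQmj
      have hQjrow : ∀ l, l ≠ m → Q j l = 0 := fun l hl => by
        by_contra h
        exact hl (hQ.2.1 j l m h (by rw [hQjm]; exact one_ne_zero))
      have hPjm : P j m = 1 := by rw [hsymmP j m]; exact hPmj
      have hPjrow : ∀ l, l ≠ m → P j l = 0 := fun l hl => by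
        by_contra h
        exact hl (hP.2.1 j l m h (by rw [hPjm]; exact one_ne_zero))
      set E : Mat n := single m j 1 + single j m 1 with hEdef
      have hEe : ∀ p q, E p q
          = (if p = m ∧ q = j then (1:ℝ) else 0) + (if p = j ∧ q = m then (1:ℝ) else 0) :=
        fun p q => rfl
      set C' : Mat n :=
        Matrix.of (fun k l => if l = j then (if k = j then (1:ℝ) else 0) else C k l) with hC'def
      have hC'e : ∀ k l, C' k l = if l = j then (if k = j then (1:ℝ) else 0) else C k l :=
        fun k l => rfl
      have htri' : C'.BlockTriangular id := by
        intro a b hab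
        rw [hC'e]
        by_cases hb : b = j
        · subst hb
          rw [if_pos rfl, if_neg]
          intro h; subst h; exact lt_irrefl _ hab
        · rw [if_neg hb]; exact htri hab
      have hdiag' : ∀ i, C' i i ≠ 0 := by
        intro i; rw [hC'e]
        by_cases hi : i = j
        · subst hi; simp
        · rw [if_neg hi]; exact hdiag i
      have hPEm : ∀ q, (P - E) m q = 0 := by
        intro q
        rw [Matrix.sub_apply, hEe]
        by_cases hq : q = j
        · subst hq; rw [hPmj]; simp [hnotmj]
        · rw [hProw q hq]; simp [hq, hnotmj]
      have hPEj : ∀ q, (P - E) j q = 0 := by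
        intro q
        rw [Matrix.sub_apply, hEe]
        by_cases hq : q = m
        · subst hq; rw [hPjm]; simp [hjm]
        · rw [hPjrow q hq]; simp [hjm, hq]
      have hPEother : ∀ p, p ≠ m → p ≠ j → ∀ q, (P - E) p q = P p q := by
        intro p hpm hpj q
        rw [Matrix.sub_apply, hEe]
        simp [hpm, hpj]
      have hQEm : ∀ q, (Q - E) m q = 0 := by
        intro q
        rw [Matrix.sub_apply, hEe]
        by_cases hq : q = j
        · subst hq; rw [hQmj]; simp [hnotmj]
        · rw [hQmrow q hq]; simp [hq, hnotmj]
      have hQEj : ∀ q, (Q - E) j q = 0 := by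
        intro q
        rw [Matrix.sub_apply, hEe]
        by_cases hq : q = m
        · subst hq; rw [hQjm]; simp [hjm]
        · rw [hQjrow q hq]; simp [hjm, hq]
      have hQEother : ∀ p, p ≠ m → p ≠ j → ∀ q, (Q - E) p q = Q p q := by
        intro p hpm hpj q
        rw [Matrix.sub_apply, hEe]
        simp [hpm, hpj]
      have hEsymm : E.IsSymm := by
        apply Matrix.IsSymm.ext
        intro a b
        rw [hEe, hEe, add_comm]
        exact congrArg₂ (· + ·) (if_congr and_comm rfl rfl) (if_congr and_comm rfl rfl)
      have hPEcolj : ∀ p, (P - E) p j = 0 := by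
        intro p
        by_cases hpm : p = m
        · rw [hpm]; exact hPEm j
        · by_cases hpj : p = j
          · rw [hpj]; exact hPEj j
          · rw [hPEother p hpm hpj j, hsymmP p j]; exact hPjrow p hpm
      have hkey : C'ᵀ * (P - E) * C' = Q - E := by
        ext k l
        by_cases hl : l = j
        · subst hl
          have hz1 : (C'ᵀ * (P - E) * C') k l = 0 := by
            rw [Matrix.mul_assoc, Matrix.mul_apply]
            apply Finset.sum_eq_zero
            intro p _
            have hz2 : ((P - E) * C') p l = 0 := by
              rw [Matrix.mul_apply]
              apply Finset.sum_eq_zero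
              intro q _
              by_cases hq : q = l
              · subst hq; rw [hPEcolj p, zero_mul]
              · rw [hC'e q l, if_pos rfl, if_neg hq, mul_zero]
            rw [hz2, mul_zero]
          rw [hz1, Matrix.sub_apply, hEe]
          by_cases hk : k = m
          · subst hk; rw [hQmj]; simp [hnotmj]
          · have hq0 : Q k l = 0 := by rw [hsymmQ k l]; exact hQjrow k hk
            rw [hq0]; simp [hk, hjm]
        · by_cases hk : k = j
          · subst hk
            have hz1 : (C'ᵀ * (P - E) * C') k l = 0 := by
              rw [Matrix.mul_assoc, Matrix.mul_apply]
              apply Finset.sum_eq_zero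
              intro p _
              rw [Matrix.transpose_apply]
              by_cases hp : p = k
              · subst hp
                have hz2 : ((P - E) * C') p l = 0 := by
                  rw [Matrix.mul_apply]
                  exact Finset.sum_eq_zero fun q _ => by rw [hPEj q, zero_mul]
                rw [hz2, mul_zero]
              · rw [hC'e p k, if_pos rfl, if_neg hp, zero_mul]
            rw [hz1, Matrix.sub_apply, hEe]
            by_cases hlm : l = m
            · subst hlm; rw [hQjm]; simp [hjm]
            · rw [hQjrow l hlm]; simp [hjm, hlm]
          · have hLHS : (C'ᵀ * (P - E) * C') k l = (Cᵀ * (P - E) * C) k l := by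
              rw [Matrix.mul_assoc, Matrix.mul_assoc, Matrix.mul_apply, Matrix.mul_apply]
              apply Finset.sum_congr rfl
              intro p _
              rw [Matrix.transpose_apply, Matrix.transpose_apply, hC'e p k, if_neg hk,
                Matrix.mul_apply, Matrix.mul_apply]
              congr 1
              apply Finset.sum_congr rfl
              intro q _
              rw [hC'e q l, if_neg hl]
            rw [hLHS]
            have hsubE : Cᵀ * (P - E) * C = Q - Cᵀ * E * C := by
              rw [Matrix.mul_sub, Matrix.sub_mul, hc]
            rw [hsubE, Matrix.sub_apply, Matrix.sub_apply]
            have hECkl : (Cᵀ * E * C) k l = 0 := by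
              have hEsplit : Cᵀ * E * C = Cᵀ * single m j 1 * C + Cᵀ * single j m 1 * C := by
                rw [hEdef, Matrix.mul_add, Matrix.add_mul]
              rw [hEsplit, Matrix.add_apply, single_congr, single_congr,
                hCjl l hl, hCjl k hk]
              ring
            rw [hECkl, hEe]
            simp [hk, hl]
      have hPE : IsSP (P - E) := by
        apply isSP_rows P _ hP (hP.1.sub hEsymm)
        intro p
        by_cases hpm : p = m
        · subst hpm; exact Or.inl hPEm
        by_cases hpj : p = j
        · subst hpj; exact Or.inl hPEj
        · exact Or.inr (hPEother p hpm hpj)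
      have hQEsp : IsSP (Q - E) := by
        apply isSP_rows Q _ hQ (hQ.1.sub hEsymm)
        intro p
        by_cases hpm : p = m
        · subst hpm; exact Or.inl hQEm
        by_cases hpj : p = j
        · subst hpj; exact Or.inl hQEj
        · exact Or.inr (hQEother p hpm hpj)
      have hzPE : ∀ i : Fin n, (i : ℕ) + d < n → ∀ k, (P - E) i k = 0 := by
        intro i hi k
        rcases key i hi with h | h
        · have him : i ≠ m := ne_of_lt h
          have hij : i ≠ j := by
            intro hh; subst hh; exact hmj h
          rw [hPEother i him hij k, hrowlt i h k]
        · subst h; exact hPEm k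
      have := ih (P - E) (Q - E) C' hPE hQEsp htri' hdiag' hkey hzPE
      exact sub_left_inj.mp this

lemma exists_aux (n : ℕ) : ∀ (d : ℕ) (A : Mat n), A.IsSymm →
    (∀ i : Fin n, (i : ℕ) + d < n → ∀ k, A i k = 0) →
    ∃ C P : Mat n, C.BlockTriangular id ∧ (∀ i, C i i ≠ 0) ∧ IsSP P ∧
      Cᵀ * A * C = P ∧ (∀ i, (∀ k, A i k = 0) → Fixes C i) := by
  intro d
  induction d with
  | zero =>
    intro A hA h0
    have hA0 : A = 0 := by ext i k; exact h0 i (by omega) k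
    refine ⟨1, 0, Matrix.blockTriangular_one, ?_, ?_, ?_, ?_⟩
    · intro i; rw [Matrix.one_apply_eq]; exact one_ne_zero
    · refine ⟨by simp [Matrix.IsSymm], ?_, ?_, ?_⟩
      · intro i j k h; exact absurd (Matrix.zero_apply i j) h
      · intro i h; exact absurd (Matrix.zero_apply i i) h
      · intro i j _ h; exact absurd (Matrix.zero_apply i j) h
    · rw [hA0]; simp
    · intro i _
      exact ⟨fun k => Matrix.one_apply, fun k => Matrix.one_apply⟩
  | succ d ih =>
    intro A hA hz
    by_cases hnd : n ≤ d
    · exact ih A hA (fun i hi k => absurd hi (by omega))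
    push_neg at hnd
    set m : Fin n := ⟨n - d - 1, by omega⟩ with hm
    have hrowlt : ∀ i : Fin n, i < m → ∀ k, A i k = 0 := by
      intro i hi k
      refine hz i ?_ k
      have := Fin.lt_def.mp hi
      simp only [hm] at this
      omega
    have key : ∀ (i : Fin n), (i : ℕ) + d < n → (i < m ∨ i = m) := by
      intro i hi
      rcases lt_or_eq_of_le (show (i:ℕ) ≤ (m:ℕ) by simp only [hm]; omega) with h | h
      · exact Or.inl (Fin.lt_def.mpr h)
      · exact Or.inr (Fin.ext h)
    have hsymmA : ∀ a b : Fin n, A a b = A b a := fun a b => hA.apply b a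
    by_cases hrm : ∀ k, A m k = 0
    · apply ih A hA
      intro i hi k
      rcases key i hi with h | h
      · exact hrowlt i h k
      · rw [h]; exact hrm k
    push_neg at hrm
    -- j := least column index with A m j ≠ 0
    have hSne : (Finset.univ.filter (fun l => A m l ≠ 0)).Nonempty := by
      obtain ⟨k, hk⟩ := hrm
      exact ⟨k, by simp [hk]⟩
    set j : Fin n := (Finset.univ.filter (fun l => A m l ≠ 0)).min' hSne with hjdef
    have hj : A m j ≠ 0 := by
      have := (Finset.univ.filter (fun l => A m l ≠ 0)).min'_mem hSne
      rw [← hjdef] at this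
      simpa using this
    have hjmin : ∀ l, l < j → A m l = 0 := by
      intro l hl
      by_contra h
      have : j ≤ l := Finset.min'_le _ l (by simp [h])
      exact absurd hl (not_lt.mpr this)
    by_cases hjm : j = m
    · -- diagonal pivot
      have ha : A m m ≠ 0 := by have h := hj; rw [hjm] at h; exact h
      set v : Fin n → ℝ := fun l => if l = m then 0 else -(A m l) / A m m with hvdef
      have hvm : v m = 0 := by rw [hvdef]; simp
      have hvle : ∀ l, l ≤ m → v l = 0 := by
        intro l hl
        rcases lt_or_eq_of_le hl with h | h
        · rw [hvdef]
          simp only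
          rw [if_neg (ne_of_lt h), hsymmA m l, hrowlt l h m]
          simp
        · rw [hvdef]; simp [h]
      set C₁ := elemC m v with hC₁def
      have hC₁tri : C₁.BlockTriangular id := elemC_tri m v hvle
      set A₁ := C₁ᵀ * A * C₁ with hA₁def
      have hA₁e : ∀ k l, A₁ k l = A k l + v k * A m l + A k m * v l + v k * A m m * v l :=
        fun k l => elemC_congr A m v k l
      have hA₁m : ∀ l, A₁ m l = if l = m then A m m else 0 := by
        intro l
        rw [hA₁e, hvm]
        by_cases hl : l = m
        · rw [hl, hvm, if_pos rfl]; ring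
        · rw [if_neg hl, hvdef]
          simp only [if_neg hl]
          field_simp
          ring
      have hA₁sym : A₁.IsSymm := congr_isSymm hA C₁
      have hsymmA₁ : ∀ a b : Fin n, A₁ a b = A₁ b a := fun a b => hA₁sym.apply b a
      have hA₁z : ∀ i : Fin n, (∀ k, A i k = 0) → ∀ k, A₁ i k = 0 := by
        intro i h0 k
        have him : i ≠ m := by
          intro h; rw [h] at h0; exact hj (h0 j)
        have hvi : v i = 0 := by
          rw [hvdef]
          simp only [if_neg him]
          rw [hsymmA m i, h0 m]
          simp
        rw [hA₁e, hvi, h0 k, h0 m]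
        ring
      have hA₁lt : ∀ i : Fin n, i < m → ∀ k, A₁ i k = 0 := fun i hi =>
        hA₁z i (hrowlt i hi)
      -- scaling
      set s : ℝ := Real.sqrt |A m m| with hsdef
      have hspos : 0 < s := Real.sqrt_pos.mpr (abs_pos.mpr ha)
      have hs : s ≠ 0 := ne_of_gt hspos
      have hss : s * s = |A m m| := Real.mul_self_sqrt (abs_nonneg _)
      set w : Fin n → ℝ := fun i => if i = m then 1/s else 1 with hwdef
      have hw0 : ∀ i, w i ≠ 0 := by
        intro i; rw [hwdef]
        by_cases hi : i = m
        · simp [hi, hs]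
        · simp [hi]
      set D := Matrix.diagonal w with hDdef
      set A₂ := Dᵀ * A₁ * D with hA₂def
      have hA₂e : ∀ k l, A₂ k l = w k * A₁ k l * w l := fun k l => diag_congr A₁ w k l
      set e : ℝ := if 0 < A m m then 1 else -1 with hedef
      have he1 : e = 1 ∨ e = -1 := by
        rw [hedef]
        by_cases h : 0 < A m m
        · left; rw [if_pos h]
        · right; rw [if_neg h]
      have hεa : w m * A m m * w m = e := by
        have hwm : w m = 1/s := by rw [hwdef]; simp
        rw [hwm, hedef]
        have h1 : 1/s * A m m * (1/s) = A m m / (s * s) := by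
          rw [div_mul_eq_mul_div, div_mul_div_comm, one_mul, mul_one]
        rw [h1, hss]
        by_cases h : 0 < A m m
        · rw [if_pos h, abs_of_pos h, div_self ha]
        · have hneg : A m m < 0 := lt_of_le_of_ne (not_lt.mp h) ha
          rw [if_neg h, abs_of_neg hneg, div_neg, div_self ha]
      have hA₂m : ∀ l, A₂ m l = if l = m then e else 0 := by
        intro l
        rw [hA₂e, hA₁m]
        by_cases hl : l = m
        · rw [if_pos hl, if_pos hl, hl, hεa]
        · rw [if_neg hl, if_neg hl]; ring
      have hA₂sym : A₂.IsSymm := congr_isSymm hA₁sym D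
      have hsymmA₂ : ∀ a b : Fin n, A₂ a b = A₂ b a := fun a b => hA₂sym.apply b a
      have hA₂z : ∀ i : Fin n, (∀ k, A i k = 0) → ∀ k, A₂ i k = 0 := by
        intro i h0 k
        rw [hA₂e, hA₁z i h0 k]
        ring
      have hA₂lt : ∀ i : Fin n, i < m → ∀ k, A₂ i k = 0 := fun i hi =>
        hA₂z i (hrowlt i hi)
      -- masked matrix
      set B : Mat n := Matrix.of (fun k l => if k = m ∨ l = m then (0:ℝ) else A₂ k l)
        with hBdef
      have hBe : ∀ k l, B k l = if k = m ∨ l = m then (0:ℝ) else A₂ k l := fun k l => rfl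
      have hBsym : B.IsSymm := by
        apply Matrix.IsSymm.ext
        intro a b
        rw [hBe, hBe, hsymmA₂ b a]
        exact if_congr or_comm rfl rfl
      have hBz : ∀ i : Fin n, (i : ℕ) + d < n → ∀ k, B i k = 0 := by
        intro i hi k
        rcases key i hi with h | h
        · rw [hBe]
          split_ifs with hc
          · rfl
          · exact hA₂lt i h k
        · rw [hBe, if_pos (Or.inl h)]
      have hBrm : ∀ k, B m k = 0 := fun k => by rw [hBe, if_pos (Or.inl rfl)]
      have hBcm : ∀ k, B k m = 0 := fun k => by rw [hBe, if_pos (Or.inr rfl)]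
      obtain ⟨C₃, P', htri₃, hdiag₃, hSP', hP'eq, hfix₃⟩ := ih B hBsym hBz
      have hfm : Fixes C₃ m := hfix₃ m hBrm
      have hA₂B : A₂ = B + single m m e := by
        ext k l
        rw [Matrix.add_apply, hBe, single_apply]
        by_cases hk : k = m
        · by_cases hl : l = m
          · rw [if_pos (Or.inl hk), if_pos ⟨hk, hl⟩, hk, hl, hA₂m m, if_pos rfl, zero_add]
          · rw [if_pos (Or.inl hk), if_neg (fun h => hl h.2), hk, hA₂m l, if_neg hl, zero_add]
        · by_cases hl : l = m
          · rw [if_pos (Or.inr hl), if_neg (fun h => hk h.1), hl, hsymmA₂ k m, hA₂m k,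
              if_neg hk, zero_add]
          · rw [if_neg (fun h => h.elim hk hl), if_neg (fun h => hk h.1), add_zero]
      have hfinal : C₃ᵀ * A₂ * C₃ = P' + single m m e := by
        rw [hA₂B, Matrix.mul_add, Matrix.add_mul, hP'eq,
          congr_single_fix C₃ m m e hfm.1 hfm.1]
      have hP'z := congr_rowcol_zero B C₃ m hfm.2 hBrm hBcm
      have hP'm : ∀ l, P' m l = 0 := by intro l; rw [← hP'eq]; exact hP'z.1 l
      have hP'm' : ∀ l, P' l m = 0 := by intro l; rw [← hP'eq]; exact hP'z.2 l
      refine ⟨C₁ * (D * C₃), P' + single m m e, ?_, ?_, ?_, ?_, ?_⟩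
      · exact hC₁tri.mul ((Matrix.blockTriangular_diagonal w).mul htri₃)
      · intro i
        rw [diag_mul_tri hC₁tri ((Matrix.blockTriangular_diagonal w).mul htri₃) i,
          diag_mul_tri (Matrix.blockTriangular_diagonal w) htri₃ i,
          hC₁def, elemC_diag m v hvm i, Matrix.diagonal_apply_eq w i]
        simp only [one_mul]
        exact mul_ne_zero (hw0 i) (hdiag₃ i)
      · exact isSP_add_diag P' hSP' m e he1 hP'm hP'm'
      · rw [congr_mul A C₁ (D * C₃), ← hA₁def, congr_mul A₁ D C₃, ← hA₂def]
        exact hfinal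
      · intro i h0
        have him : i ≠ m := by
          intro h; rw [h] at h0; exact hj (h0 j)
        have hvi : v i = 0 := by
          rw [hvdef]
          simp only [if_neg him]
          rw [hsymmA m i, h0 m]
          simp
        refine Fixes_mul ⟨?_, ?_⟩ (Fixes_mul ⟨?_, ?_⟩ (hfix₃ i ?_))
        · intro k
          rw [hC₁def]
          show (if i = k then (1:ℝ) else 0) + (if i = m then v k else 0) = _
          rw [if_neg him, add_zero]
        · intro k
          rw [hC₁def]
          show (if k = i then (1:ℝ) else 0) + (if k = m then v i else 0) = _
          rw [hvi]
          simp
        · intro k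
          rw [hDdef, Matrix.diagonal_apply]
          by_cases hik : i = k
          · rw [if_pos hik, if_pos hik, hwdef]; simp [him]
          · rw [if_neg hik, if_neg hik]
        · intro k
          rw [hDdef, Matrix.diagonal_apply]
          by_cases hik : k = i
          · rw [if_pos hik, if_pos hik, hik, hwdef]; simp [him]
          · rw [if_neg hik, if_neg hik]
        · intro k
          rw [hBe]
          split_ifs with hc
          · rfl
          · exact hA₂z i h0 k
    · -- off-diagonal pivot
      have hmltj : m < j := by
        rcases lt_trichotomy j m with h | h | h
        · exact absurd (by rw [hsymmA m j]; exact hrowlt j h m) hj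
        · exact absurd h hjm
        · exact h
      have hmj : ¬ (m = j) := fun h => hjm h.symm
      -- step 1: clear row m beyond j
      set v : Fin n → ℝ := fun l => if l = j then 0 else -(A m l) / A m j with hvdef
      have hvj : v j = 0 := by rw [hvdef]; simp
      have hvle : ∀ l, l ≤ j → v l = 0 := by
        intro l hl
        rcases lt_or_eq_of_le hl with h | h
        · rw [hvdef]
          simp only
          rw [if_neg (ne_of_lt h), hjmin l h]
          simp
        · rw [hvdef]; simp [h]
      have hvm : v m = 0 := hvle m (le_of_lt hmltj)
      set C₁ := elemC j v with hC₁def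
      have hC₁tri : C₁.BlockTriangular id := elemC_tri j v hvle
      set A₁ := C₁ᵀ * A * C₁ with hA₁def
      have hA₁e : ∀ k l, A₁ k l = A k l + v k * A j l + A k j * v l + v k * A j j * v l :=
        fun k l => elemC_congr A j v k l
      have hA₁m : ∀ l, A₁ m l = if l = j then A m j else 0 := by
        intro l
        rw [hA₁e, hvm]
        by_cases hl : l = j
        · rw [hl, hvj, if_pos rfl]; ring
        · rw [if_neg hl, hvdef]
          simp only [if_neg hl]
          rw [hsymmA j l]
          field_simp
          ring
      have hA₁sym : A₁.IsSymm := congr_isSymm hA C₁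
      have hsymmA₁ : ∀ a b : Fin n, A₁ a b = A₁ b a := fun a b => hA₁sym.apply b a
      have hA₁z : ∀ i : Fin n, (∀ k, A i k = 0) → ∀ k, A₁ i k = 0 := by
        intro i h0 k
        have hij : i ≠ j := by
          intro h; rw [h] at h0
          exact hj (by rw [hsymmA m j]; exact h0 m)
        have hvi : v i = 0 := by
          rw [hvdef]
          simp only [if_neg hij]
          rw [hsymmA m i, h0 m]
          simp
        rw [hA₁e, hvi, h0 k, h0 j]; ring
      have hA₁lt : ∀ i : Fin n, i < m → ∀ k, A₁ i k = 0 := fun i hi => hA₁z i (hrowlt i hi)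
      have hA₁mm : A₁ m m = 0 := by rw [hA₁m m, if_neg hmj]
      have hA₁jm : A₁ j m = A m j := by rw [hsymmA₁ j m, hA₁m j, if_pos rfl]
      -- step 2: clear row j using the pivot at (m,j)
      set u2 : Fin n → ℝ := fun l =>
        if l = m then 0 else if l = j then -(A₁ j j)/(2 * A m j) else -(A₁ j l)/(A m j)
        with hu2def
      have hu2m : u2 m = 0 := by rw [hu2def]; simp
      have hu2j : u2 j = -(A₁ j j)/(2 * A m j) := by rw [hu2def]; simp [hjm]
      have hu2other : ∀ l, l ≠ m → l ≠ j → u2 l = -(A₁ j l)/(A m j) := by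
        intro l h1 h2; rw [hu2def]; simp [h1, h2]
      have hu2le : ∀ l, l ≤ m → u2 l = 0 := by
        intro l hl
        rcases lt_or_eq_of_le hl with h | h
        · rw [hu2other l (ne_of_lt h) (ne_of_lt (h.trans hmltj)), hsymmA₁ j l, hA₁lt l h j]
          simp
        · rw [h]; exact hu2m
      set C₂ := elemC m u2 with hC₂def
      have hC₂tri : C₂.BlockTriangular id := elemC_tri m u2 hu2le
      set A₂ := C₂ᵀ * A₁ * C₂ with hA₂def
      have hA₂e : ∀ k l,
          A₂ k l = A₁ k l + u2 k * A₁ m l + A₁ k m * u2 l + u2 k * A₁ m m * u2 l :=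
        fun k l => elemC_congr A₁ m u2 k l
      have hA₂m : ∀ l, A₂ m l = if l = j then A m j else 0 := by
        intro l
        rw [hA₂e, hu2m, hA₁m, hA₁mm]
        ring
      have hA₂sym : A₂.IsSymm := congr_isSymm hA₁sym C₂
      have hsymmA₂ : ∀ a b : Fin n, A₂ a b = A₂ b a := fun a b => hA₂sym.apply b a
      have hA₂j : ∀ l, A₂ j l = if l = m then A m j else 0 := by
        intro l
        rw [hA₂e, hA₁m, hA₁mm, hA₁jm]
        by_cases hlm : l = m
        · rw [hlm, hA₁jm, hu2m, if_neg hmj, if_pos rfl]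
          ring
        · rw [if_neg hlm]
          by_cases hlj : l = j
          · rw [hlj, if_pos rfl, hu2j]
            field_simp
            ring
          · rw [if_neg hlj, hu2other l hlm hlj]
            field_simp
            ring
      have hA₂z : ∀ i : Fin n, (∀ k, A i k = 0) → ∀ k, A₂ i k = 0 := by
        intro i h0 k
        have him : i ≠ m := by
          intro h; rw [h] at h0; exact hj (h0 j)
        have hij : i ≠ j := by
          intro h; rw [h] at h0
          exact hj (by rw [hsymmA m j]; exact h0 m)
        have hu2i : u2 i = 0 := by
          rw [hu2other i him hij, hsymmA₁ j i, hA₁z i h0 j]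
          simp
        rw [hA₂e, hu2i, hA₁z i h0 k, hA₁z i h0 m]
        ring
      -- step 3: scaling the pivot to 1
      set u3 : Fin n → ℝ := fun i => if i = j then 1/(A m j) else 1 with hu3def
      have hu30 : ∀ i, u3 i ≠ 0 := by
        intro i; rw [hu3def]
        by_cases hi : i = j
        · simp only [if_pos hi]
          exact one_div_ne_zero hj
        · simp [hi]
      have hu3m : u3 m = 1 := by rw [hu3def]; simp [hmj]
      have hu3j : u3 j = 1/(A m j) := by rw [hu3def]; simp
      set D := Matrix.diagonal u3 with hDdef
      set A₃ := Dᵀ * A₂ * D with hA₃def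
      have hA₃e : ∀ k l, A₃ k l = u3 k * A₂ k l * u3 l := fun k l => diag_congr A₂ u3 k l
      have hA₃m : ∀ l, A₃ m l = if l = j then 1 else 0 := by
        intro l
        rw [hA₃e, hA₂m, hu3m]
        by_cases hlj : l = j
        · rw [if_pos hlj, if_pos hlj, hlj, hu3j]
          field_simp
        · rw [if_neg hlj, if_neg hlj]; ring
      have hA₃j : ∀ l, A₃ j l = if l = m then 1 else 0 := by
        intro l
        rw [hA₃e, hA₂j, hu3j]
        by_cases hlm : l = m
        · rw [if_pos hlm, if_pos hlm, hlm, hu3m]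
          field_simp
        · rw [if_neg hlm, if_neg hlm]; ring
      have hA₃sym : A₃.IsSymm := congr_isSymm hA₂sym D
      have hsymmA₃ : ∀ a b : Fin n, A₃ a b = A₃ b a := fun a b => hA₃sym.apply b a
      have hA₃z : ∀ i : Fin n, (∀ k, A i k = 0) → ∀ k, A₃ i k = 0 := by
        intro i h0 k
        rw [hA₃e, hA₂z i h0 k]; ring
      have hA₃lt : ∀ i : Fin n, i < m → ∀ k, A₃ i k = 0 := fun i hi => hA₃z i (hrowlt i hi)
      -- masked matrix
      set B : Mat n :=
        Matrix.of (fun k l => if k = m ∨ k = j ∨ l = m ∨ l = j then (0:ℝ) else A₃ k l)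
        with hBdef
      have hBe : ∀ k l, B k l = if k = m ∨ k = j ∨ l = m ∨ l = j then (0:ℝ) else A₃ k l :=
        fun _ _ => rfl
      have hBsym : B.IsSymm := by
        apply Matrix.IsSymm.ext
        intro a b
        rw [hBe, hBe, hsymmA₃ b a]
        refine if_congr ?_ rfl rfl
        constructor
        · rintro (h|h|h|h)
          · exact Or.inr (Or.inr (Or.inl h))
          · exact Or.inr (Or.inr (Or.inr h))
          · exact Or.inl h
          · exact Or.inr (Or.inl h)
        · rintro (h|h|h|h)
          · exact Or.inr (Or.inr (Or.inl h))
          · exact Or.inr (Or.inr (Or.inr h))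
          · exact Or.inl h
          · exact Or.inr (Or.inl h)
      have hBz : ∀ i : Fin n, (i : ℕ) + d < n → ∀ k, B i k = 0 := by
        intro i hi k
        rcases key i hi with h | h
        · rw [hBe]
          split_ifs with hc
          · rfl
          · exact hA₃lt i h k
        · rw [hBe, if_pos (Or.inl h)]
      have hBrm : ∀ k, B m k = 0 := fun k => by rw [hBe, if_pos (Or.inl rfl)]
      have hBcm : ∀ k, B k m = 0 := fun k => by rw [hBe, if_pos (Or.inr (Or.inr (Or.inl rfl)))]
      have hBrj : ∀ k, B j k = 0 := fun k => by rw [hBe, if_pos (Or.inr (Or.inl rfl))]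
      have hBcj : ∀ k, B k j = 0 := fun k => by
        rw [hBe, if_pos (Or.inr (Or.inr (Or.inr rfl)))]
      obtain ⟨C₄, P', htri₄, hdiag₄, hSP', hP'eq, hfix₄⟩ := ih B hBsym hBz
      have hfm : Fixes C₄ m := hfix₄ m hBrm
      have hfj : Fixes C₄ j := hfix₄ j hBrj
      have hA₃B : A₃ = B + (single m j 1 + single j m 1) := by
        ext k l
        rw [Matrix.add_apply, Matrix.add_apply, hBe, single_apply, single_apply]
        by_cases hk : k = m
        · rw [hk, if_pos (Or.inl rfl), hA₃m l]
          by_cases hl : l = j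
          · rw [if_pos hl, if_pos ⟨rfl, hl⟩, if_neg (fun h => hmj h.1)]
            ring
          · rw [if_neg hl, if_neg (fun h => hl h.2), if_neg (fun h => hmj h.1)]
            ring
        · by_cases hk2 : k = j
          · rw [hk2, if_pos (Or.inr (Or.inl rfl)), hA₃j l]
            by_cases hl : l = m
            · rw [if_pos hl, if_neg (fun h => hjm h.1), if_pos ⟨rfl, hl⟩]
              ring
            · rw [if_neg hl, if_neg (fun h => hjm h.1), if_neg (fun h : j = j ∧ l = m => hl h.2)]
              ring
          · by_cases hl : l = m
            · rw [if_pos (Or.inr (Or.inr (Or.inl hl))), hl, hsymmA₃ k m, hA₃m k, if_neg hk2,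
                if_neg (fun h => hk h.1), if_neg (fun h => hk2 h.1)]
              ring
            · by_cases hl2 : l = j
              · rw [if_pos (Or.inr (Or.inr (Or.inr hl2))), hl2, hsymmA₃ k j, hA₃j k,
                  if_neg hk, if_neg (fun h => hk h.1), if_neg (fun h => hk2 h.1)]
                ring
              · rw [if_neg (fun h => h.elim hk (fun h2 => h2.elim hk2 (fun h3 => h3.elim hl hl2))),
                  if_neg (fun h => hk h.1), if_neg (fun h => hk2 h.1)]
                ring
      have hfinal : C₄ᵀ * A₃ * C₄ = P' + (single m j 1 + single j m 1) := by
        rw [hA₃B, Matrix.mul_add, Matrix.add_mul, hP'eq, Matrix.mul_add, Matrix.add_mul,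
          congr_single_fix C₄ m j 1 hfm.1 hfj.1, congr_single_fix C₄ j m 1 hfj.1 hfm.1]
      have hP'zm := congr_rowcol_zero B C₄ m hfm.2 hBrm hBcm
      have hP'zj := congr_rowcol_zero B C₄ j hfj.2 hBrj hBcj
      have hP'm : ∀ l, P' m l = 0 := fun l => by rw [← hP'eq]; exact hP'zm.1 l
      have hP'm' : ∀ l, P' l m = 0 := fun l => by rw [← hP'eq]; exact hP'zm.2 l
      have hP'j : ∀ l, P' j l = 0 := fun l => by rw [← hP'eq]; exact hP'zj.1 l
      have hP'j' : ∀ l, P' l j = 0 := fun l => by rw [← hP'eq]; exact hP'zj.2 l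
      refine ⟨C₁ * (C₂ * (D * C₄)), P' + (single m j 1 + single j m 1), ?_, ?_, ?_, ?_, ?_⟩
      · exact hC₁tri.mul (hC₂tri.mul ((Matrix.blockTriangular_diagonal u3).mul htri₄))
      · intro i
        rw [diag_mul_tri hC₁tri
            (hC₂tri.mul ((Matrix.blockTriangular_diagonal u3).mul htri₄)) i,
          diag_mul_tri hC₂tri ((Matrix.blockTriangular_diagonal u3).mul htri₄) i,
          diag_mul_tri (Matrix.blockTriangular_diagonal u3) htri₄ i,
          hC₁def, elemC_diag j v hvj i, hC₂def, elemC_diag m u2 hu2m i,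
          Matrix.diagonal_apply_eq u3 i]
        simp only [one_mul]
        exact mul_ne_zero (hu30 i) (hdiag₄ i)
      · exact isSP_add_off P' hSP' m j hmj hP'm hP'm' hP'j hP'j'
      · rw [congr_mul A C₁ (C₂ * (D * C₄)), ← hA₁def, congr_mul A₁ C₂ (D * C₄), ← hA₂def,
          congr_mul A₂ D C₄, ← hA₃def]
        exact hfinal
      · intro i h0
        have him : i ≠ m := by
          intro h; rw [h] at h0; exact hj (h0 j)
        have hij : i ≠ j := by
          intro h; rw [h] at h0
          exact hj (by rw [hsymmA m j]; exact h0 m)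
        have hvi : v i = 0 := by
          rw [hvdef]
          simp only [if_neg hij]
          rw [hsymmA m i, h0 m]
          simp
        have hu2i : u2 i = 0 := by
          rw [hu2other i him hij, hsymmA₁ j i, hA₁z i h0 j]
          simp
        refine Fixes_mul ⟨?_, ?_⟩ (Fixes_mul ⟨?_, ?_⟩ (Fixes_mul ⟨?_, ?_⟩ (hfix₄ i ?_)))
        · intro k
          rw [hC₁def]
          show (if i = k then (1:ℝ) else 0) + (if i = j then v k else 0) = _
          rw [if_neg hij, add_zero]
        · intro k
          rw [hC₁def]
          show (if k = i then (1:ℝ) else 0) + (if k = j then v i else 0) = _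
          rw [hvi]
          simp
        · intro k
          rw [hC₂def]
          show (if i = k then (1:ℝ) else 0) + (if i = m then u2 k else 0) = _
          rw [if_neg him, add_zero]
        · intro k
          rw [hC₂def]
          show (if k = i then (1:ℝ) else 0) + (if k = m then u2 i else 0) = _
          rw [hu2i]
          simp
        · intro k
          rw [hDdef, Matrix.diagonal_apply]
          by_cases hik : i = k
          · rw [if_pos hik, if_pos hik, hu3def]; simp [hij]
          · rw [if_neg hik, if_neg hik]
        · intro k
          rw [hDdef, Matrix.diagonal_apply]
          by_cases hik : k = i
          · rw [if_pos hik, if_pos hik, hik, hu3def]; simp [hij]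
          · rw [if_neg hik, if_neg hik]
        · intro k
          rw [hBe]
          split_ifs with hc
          · rfl
          · exact hA₃z i h0 k

end SP

/-- Section 6.1 (signed patterns): every symmetric real `n×n` matrix is congruent, via an
invertible upper triangular real matrix, to a unique symmetric real matrix having at most
one nonzero entry in each row, whose nonzero diagonal entries are `±1` and whose nonzero
off-diagonal entries are `1`. -/
theorem congruent_to_unique_signed_pattern (n : ℕ) (A : Matrix (Fin n) (Fin n) ℝ)
    (hA : A.IsSymm) :
    ∃! P : Matrix (Fin n) (Fin n) ℝ,
      (P.IsSymm ∧ (∀ i j k, P i j ≠ 0 → P i k ≠ 0 → j = k) ∧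
        (∀ i, P i i ≠ 0 → P i i = 1 ∨ P i i = -1) ∧
        (∀ i j, i ≠ j → P i j ≠ 0 → P i j = 1)) ∧
      ∃ C : Matrix (Fin n) (Fin n) ℝ, C.det ≠ 0 ∧ C.BlockTriangular id ∧
        Cᵀ * A * C = P := by
  obtain ⟨C, P, htri, hdiag, hSP, heq, -⟩ :=
    SP.exists_aux n n A hA (fun i hi k => absurd hi (by omega))
  have hdetC : C.det ≠ 0 := by
    rw [Matrix.det_of_upperTriangular htri]
    exact Finset.prod_ne_zero_iff.mpr (fun i _ => hdiag i)
  refine ⟨P, ⟨⟨hSP.1, hSP.2.1, hSP.2.2.1, hSP.2.2.2⟩, C, hdetC, htri, heq⟩, ?_⟩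
  rintro Q ⟨⟨hQsym, hQ1, hQ2, hQ3⟩, C₂, hdet₂, htri₂, heq₂⟩
  have hCu : IsUnit C.det := isUnit_iff_ne_zero.mpr hdetC
  have : Invertible C := C.invertibleOfIsUnitDet hCu
  have htri₃ : (C⁻¹ * C₂).BlockTriangular id :=
    (Matrix.blockTriangular_inv_of_blockTriangular htri).mul htri₂
  have hdet₃ : (C⁻¹ * C₂).det ≠ 0 := by
    rw [Matrix.det_mul, Matrix.det_nonsing_inv, Ring.inverse_eq_inv']
    exact mul_ne_zero (inv_ne_zero hdetC) hdet₂
  have hdiag₃ : ∀ i, (C⁻¹ * C₂) i i ≠ 0 := by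
    intro i h
    apply hdet₃
    rw [Matrix.det_of_upperTriangular htri₃]
    exact Finset.prod_eq_zero (Finset.mem_univ i) h
  have hinv1 : (C⁻¹)ᵀ * Cᵀ = 1 := by
    rw [Matrix.transpose_nonsing_inv]
    exact Matrix.nonsing_inv_mul Cᵀ (by rwa [Matrix.det_transpose])
  have hinv2 : C * C⁻¹ = 1 := Matrix.mul_nonsing_inv C hCu
  have hcongr : (C⁻¹ * C₂)ᵀ * P * (C⁻¹ * C₂) = Q := by
    rw [← heq, ← heq₂, SP.congr_mul]
    have hmid : (C⁻¹)ᵀ * (Cᵀ * A * C) * C⁻¹ = A := by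
      calc (C⁻¹)ᵀ * (Cᵀ * A * C) * C⁻¹
          = ((C⁻¹)ᵀ * Cᵀ) * (A * (C * C⁻¹)) := by simp only [Matrix.mul_assoc]
        _ = A := by rw [hinv1, hinv2, Matrix.one_mul, Matrix.mul_one]
    rw [hmid]
  exact (SP.uniq_aux n n P Q (C⁻¹ * C₂) hSP ⟨hQsym, hQ1, hQ2, hQ3⟩ htri₃ hdiag₃ hcongr
    (fun i hi k => absurd hi (by omega))).symm
end
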